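/- arXiv:2105.00735 — 2 statements merged into one kernel-verified Lean document; each statement's English description precedes it below -/
import Mathlib

section
/- Assume the set A of action names is nonempty. Then there is no finite axiom system over CCS that is sound modulo bisimilarity ∼_B and ground-complete modulo bisimilarity ∼_B (Moller's theorem: bisimilarity has no finite ground-complete equational axiomatisation over CCS). -/
/-- Actions: names, co-names and the silent action τ. -/
inductive Act (A : Type) : Type
  | name : A → Act A
  | coname : A → Act A
  | tau : Act A
  deriving DecidableEq

/-- Complementation of actions (`co` of τ is τ; it is only ever used on non-τ actions). -/
def Act.co {A : Type} : Act A → Act A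
  | .name a => .coname a
  | .coname a => .name a
  | .tau => .tau

/-- CCS terms: 0, variables, prefixing, choice and parallel composition. -/
inductive Tm (A : Type) : Type
  | nil : Tm A
  | var : ℕ → Tm A
  | pre : Act A → Tm A → Tm A
  | plus : Tm A → Tm A → Tm A
  | par : Tm A → Tm A → Tm A

/-- The SOS transition relation of CCS. -/
inductive Step {A : Type} : Tm A → Act A → Tm A → Prop
  | pre (μ : Act A) (t : Tm A) : Step (.pre μ t) μ t
  | plusL {t u t' : Tm A} {μ : Act A} : Step t μ t' → Step (.plus t u) μ t'
  | plusR {t u u' : Tm A} {μ : Act A} : Step u μ u' → Step (.plus t u) μ u'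
  | parL {t u t' : Tm A} {μ : Act A} : Step t μ t' → Step (.par t u) μ (.par t' u)
  | parR {t u u' : Tm A} {μ : Act A} : Step u μ u' → Step (.par t u) μ (.par t u')
  | comm {t u t' u' : Tm A} {α : Act A} : α ≠ Act.tau → Step t α t' → Step u α.co u' →
      Step (.par t u) .tau (.par t' u')

/-- A term is closed (a process) if no variable occurs in it. -/
def Closed {A : Type} : Tm A → Prop
  | .nil => True
  | .var _ => False
  | .pre _ t => Closed t
  | .plus t u => Closed t ∧ Closed u
  | .par t u => Closed t ∧ Closed u

/-- Applying a substitution to a term. -/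
def subst {A : Type} (σ : ℕ → Tm A) : Tm A → Tm A
  | .nil => .nil
  | .var x => σ x
  | .pre μ t => .pre μ (subst σ t)
  | .plus t u => .plus (subst σ t) (subst σ u)
  | .par t u => .par (subst σ t) (subst σ u)

/-- A substitution is closed if all its values are closed. -/
def ClosedSubst {A : Type} (σ : ℕ → Tm A) : Prop := ∀ x, Closed (σ x)

/-- `R` is a bisimulation (symmetric, with the transfer property). -/
def IsBisim {A : Type} (R : Tm A → Tm A → Prop) : Prop :=
  (∀ p q, R p q → R q p) ∧
  (∀ p q μ p', R p q → Step p μ p' → ∃ q', Step q μ q' ∧ R p' q')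

/-- Bisimilarity: the largest bisimulation. -/
def Bisim {A : Type} (p q : Tm A) : Prop := ∃ R, IsBisim R ∧ R p q

/-- Equations are pairs of terms. -/
abbrev Eqn (A : Type) := Tm A × Tm A

/-- Derivability in equational logic from the axiom system `E`. -/
inductive Deriv {A : Type} (E : Set (Eqn A)) : Tm A → Tm A → Prop
  | ax {t u : Tm A} (σ : ℕ → Tm A) (h : (t, u) ∈ E) : Deriv E (subst σ t) (subst σ u)
  | refl (t : Tm A) : Deriv E t t
  | symm {t u : Tm A} (h : Deriv E t u) : Deriv E u t
  | trans {t u v : Tm A} (h₁ : Deriv E t u) (h₂ : Deriv E u v) : Deriv E t v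
  | pre (μ : Act A) {t u : Tm A} (h : Deriv E t u) : Deriv E (.pre μ t) (.pre μ u)
  | plus {t u t' u' : Tm A} (h₁ : Deriv E t u) (h₂ : Deriv E t' u') :
      Deriv E (.plus t t') (.plus u u')
  | par {t u t' u' : Tm A} (h₁ : Deriv E t u) (h₂ : Deriv E t' u') :
      Deriv E (.par t t') (.par u u')

/-- An equation is sound modulo `sim` if all its closed instances are related by `sim`. -/
def EqnSound {A : Type} (sim : Tm A → Tm A → Prop) (t u : Tm A) : Prop :=
  ∀ σ : ℕ → Tm A, ClosedSubst σ → sim (subst σ t) (subst σ u)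

/-- An axiom system is sound modulo `sim` if each of its equations is. -/
def SystemSound {A : Type} (sim : Tm A → Tm A → Prop) (E : Set (Eqn A)) : Prop :=
  ∀ e ∈ E, EqnSound sim e.1 e.2

/-- An axiom system is ground-complete modulo `sim` if it derives every valid
closed equation. -/
def GroundComplete {A : Type} (sim : Tm A → Tm A → Prop) (E : Set (Eqn A)) : Prop :=
  ∀ p q : Tm A, Closed p → Closed q → sim p q → Deriv E p q

/-- `sumF g n` is the sum `g 1 + ⋯ + g n` (empty sum being 0, no padding for `n = 1`). -/
def sumF {A : Type} (g : ℕ → Tm A) : ℕ → Tm A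
  | 0 => .nil
  | 1 => g 1
  | n + 2 => .plus (sumF g (n + 1)) (g (n + 2))
/-!
Fix an action `a` and let `n` exceed the size of every side of every axiom. The closed equation
`(a¹ + ⋯ + aⁿ) ‖ a ≈ a.a⁰ + ⋯ + a.aⁿ⁻¹ + a.(a¹ + ⋯ + aⁿ)` is sound but cannot be derived. Call a
process good if it has a summand bisimilar to `(a¹ + ⋯ + aⁿ) ‖ a` that is a parallel composition
of two non-null processes, up to padding with null components. The left-hand side is good, the
right-hand side is not, and derivations preserve goodness between instances bisimilar to
`(a¹ + ⋯ + aⁿ) ‖ a`.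

The only real case is an axiom instance `σ t ≈ σ u`. In a good summand of `σ t`, one component is
bisimilar to `a¹ + ⋯ + aⁿ`, which has `n` inequivalent derivatives, more than `t` has symbols; by
pigeonhole they come from one variable `y` of `t`, with inequivalent derivatives in `σ y` and in
parallel only with chains. Adding a summand `aᴺ⁺¹` to `σ y`, for `N` large, gives `σ t` a chain
derivative deeper than any that `σ u` can produce without `y`. By soundness `σ u` has the same
derivative, so `y` sits in `u` beside chains of the same total length, and this rebuilds a good
summand of `σ u`.
-/

infix:50 " ∼ " => Bisim

/-! ## Bisimilarity -/

namespace Act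

variable {A : Type}

@[simp] lemma co_co (μ : Act A) : μ.co.co = μ := by cases μ <;> rfl

lemma co_ne_tau {μ : Act A} (h : μ ≠ .tau) : μ.co ≠ .tau := by
  cases μ <;> simp_all [co]

@[simp] lemma co_name (a : A) : (name a : Act A).co = coname a := rfl

end Act

namespace Step

variable {A : Type} {t u q : Tm A} {μ ν : Act A}

lemma not_nil : ¬ Step (.nil : Tm A) μ q := nofun

lemma pre_inv (h : Step (.pre ν t) μ q) : μ = ν ∧ q = t := by
  cases h; exact ⟨rfl, rfl⟩

lemma plus_inv (h : Step (.plus t u) μ q) : Step t μ q ∨ Step u μ q := by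
  cases h with
  | plusL h => exact .inl h
  | plusR h => exact .inr h

lemma par_inv (h : Step (.par t u) μ q) :
    (∃ t', Step t μ t' ∧ q = .par t' u) ∨ (∃ u', Step u μ u' ∧ q = .par t u') ∨
    (∃ β t' u', β ≠ .tau ∧ Step t β t' ∧ Step u β.co u' ∧ μ = .tau ∧ q = .par t' u') := by
  cases h with
  | parL h => exact .inl ⟨_, h, rfl⟩
  | parR h => exact .inr (.inl ⟨_, h, rfl⟩)
  | comm hβ h1 h2 => exact .inr (.inr ⟨_, _, _, hβ, h1, h2, rfl, rfl⟩)

lemma comm_symm {t' u' : Tm A} {β : Act A} (hβ : β ≠ .tau) (ht : Step t β t')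
    (hu : Step u β.co u') : Step (.par u t) .tau (.par u' t') :=
  .comm (Act.co_ne_tau hβ) hu (by rwa [Act.co_co])

end Step

namespace Bisim

variable {A : Type} {p q r p' q' : Tm A} {μ : Act A}

@[refl] lemma refl (p : Tm A) : p ∼ p :=
  ⟨Eq, ⟨fun _ _ h => h.symm, fun _ _ _ p' h hs => ⟨p', h ▸ hs, rfl⟩⟩, rfl⟩

@[symm] lemma symm (h : p ∼ q) : q ∼ p := by
  obtain ⟨R, hR, hpq⟩ := h
  exact ⟨R, hR, hR.1 _ _ hpq⟩

lemma forth (h : p ∼ q) (hs : Step p μ p') : ∃ q', Step q μ q' ∧ p' ∼ q' := by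
  obtain ⟨R, hR, hpq⟩ := h
  obtain ⟨q', hq', hR'⟩ := hR.2 _ _ _ _ hpq hs
  exact ⟨q', hq', R, hR, hR'⟩

lemma back (h : p ∼ q) (hs : Step q μ q') : ∃ p', Step p μ p' ∧ p' ∼ q' := by
  obtain ⟨p', h1, h2⟩ := h.symm.forth hs
  exact ⟨p', h1, h2.symm⟩

@[trans] lemma trans (h1 : p ∼ q) (h2 : q ∼ r) : p ∼ r := by
  refine ⟨fun x z => ∃ y, x ∼ y ∧ y ∼ z, ⟨?_, ?_⟩, q, h1, h2⟩
  · rintro x z ⟨y, hxy, hyz⟩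
    exact ⟨y, hyz.symm, hxy.symm⟩
  · rintro x z μ x' ⟨y, hxy, hyz⟩ hs
    obtain ⟨y', hy', hxy'⟩ := hxy.forth hs
    obtain ⟨z', hz', hyz'⟩ := hyz.forth hy'
    exact ⟨z', hz', y', hxy', hyz'⟩

lemma of_forth_back (R : Tm A → Tm A → Prop)
    (forth : ∀ p q μ p', R p q → Step p μ p' → ∃ q', Step q μ q' ∧ (R p' q' ∨ p' ∼ q'))
    (back : ∀ p q μ q', R p q → Step q μ q' → ∃ p', Step p μ p' ∧ (R p' q' ∨ p' ∼ q'))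
    (h : R p q) : p ∼ q := by
  refine ⟨fun x y => R x y ∨ R y x ∨ x ∼ y, ⟨?_, ?_⟩, .inl h⟩
  · rintro x y (h | h | h)
    exacts [.inr (.inl h), .inl h, .inr (.inr h.symm)]
  · rintro x y μ x' (h | h | h) hs
    · obtain ⟨y', hy, h'⟩ := forth _ _ _ _ h hs
      exact ⟨y', hy, h'.imp_right Or.inr⟩
    · obtain ⟨y', hy, h'⟩ := back _ _ _ _ h hs
      exact ⟨y', hy, h'.elim (fun h => Or.inr (Or.inl h)) (fun h => Or.inr (Or.inr h.symm))⟩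
    · obtain ⟨y', hy, h'⟩ := h.forth hs
      exact ⟨y', hy, Or.inr (Or.inr h')⟩

lemma of_symm_of_forth (R : Tm A → Tm A → Prop) (hsymm : ∀ p q, R p q → R q p)
    (forth : ∀ p q μ p', R p q → Step p μ p' → ∃ q', Step q μ q' ∧ (R p' q' ∨ p' ∼ q'))
    (h : R p q) : p ∼ q :=
  of_forth_back R forth (fun p q μ q' h hs => by
    obtain ⟨p', hp, h'⟩ := forth _ _ _ _ (hsymm _ _ h) hs
    exact ⟨p', hp, h'.elim (fun h => .inl (hsymm _ _ h)) (fun h => .inr h.symm)⟩) h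

lemma nil_iff : p ∼ .nil ↔ ∀ μ p', ¬ Step p μ p' := by
  refine ⟨fun h μ p' hs => ?_, fun h => ?_⟩
  · obtain ⟨_, hs', _⟩ := h.forth hs
    exact Step.not_nil hs'
  · refine of_forth_back (fun x y => (∀ μ x', ¬ Step x μ x') ∧ y = .nil) ?_ ?_ ⟨h, rfl⟩
    · rintro x y μ x' ⟨hx, -⟩ hs
      exact absurd hs (hx _ _)
    · rintro x y μ y' ⟨-, rfl⟩ hs
      exact absurd hs Step.not_nil

lemma not_nil_of_step (hs : Step p μ p') : ¬ p ∼ .nil :=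
  fun h => nil_iff.mp h _ _ hs

lemma pre (μ : Act A) (h : p ∼ q) : .pre μ p ∼ .pre μ q := by
  refine of_symm_of_forth (fun x y => ∃ p q, p ∼ q ∧ x = .pre μ p ∧ y = .pre μ q)
    ?_ ?_ ⟨p, q, h, rfl, rfl⟩
  · rintro x y ⟨p, q, h, rfl, rfl⟩
    exact ⟨q, p, h.symm, rfl, rfl⟩
  · rintro x y ν x' ⟨p, q, h, rfl, rfl⟩ hs
    obtain ⟨rfl, rfl⟩ := Step.pre_inv hs
    exact ⟨q, .pre _ _, .inr h⟩

lemma plus (h₁ : p ∼ p') (h₂ : q ∼ q') : .plus p q ∼ .plus p' q' := by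
  refine of_symm_of_forth (fun x y => ∃ p q p' q', p ∼ p' ∧ q ∼ q' ∧
      x = .plus p q ∧ y = .plus p' q') ?_ ?_ ⟨p, q, p', q', h₁, h₂, rfl, rfl⟩
  · rintro x y ⟨p, q, p', q', h₁, h₂, rfl, rfl⟩
    exact ⟨p', q', p, q, h₁.symm, h₂.symm, rfl, rfl⟩
  · rintro x y μ x' ⟨p, q, p', q', h₁, h₂, rfl, rfl⟩ hs
    rcases Step.plus_inv hs with hs | hs
    · obtain ⟨z, hz, hb⟩ := h₁.forth hs
      exact ⟨z, .plusL hz, .inr hb⟩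
    · obtain ⟨z, hz, hb⟩ := h₂.forth hs
      exact ⟨z, .plusR hz, .inr hb⟩

lemma par (h₁ : p ∼ p') (h₂ : q ∼ q') : .par p q ∼ .par p' q' := by
  refine of_symm_of_forth (fun x y => ∃ p q p' q', p ∼ p' ∧ q ∼ q' ∧
      x = .par p q ∧ y = .par p' q') ?_ ?_ ⟨p, q, p', q', h₁, h₂, rfl, rfl⟩
  · rintro x y ⟨p, q, p', q', h₁, h₂, rfl, rfl⟩
    exact ⟨p', q', p, q, h₁.symm, h₂.symm, rfl, rfl⟩
  · rintro x y μ x' ⟨p, q, p', q', h₁, h₂, rfl, rfl⟩ hs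
    rcases Step.par_inv hs with ⟨t, ht, rfl⟩ | ⟨u, hu, rfl⟩ | ⟨β, t, u, hβ, ht, hu, rfl, rfl⟩
    · obtain ⟨z, hz, hb⟩ := h₁.forth ht
      exact ⟨.par z q', .parL hz, .inl ⟨t, q, z, q', hb, h₂, rfl, rfl⟩⟩
    · obtain ⟨z, hz, hb⟩ := h₂.forth hu
      exact ⟨.par p' z, .parR hz, .inl ⟨p, u, p', z, h₁, hb, rfl, rfl⟩⟩
    · obtain ⟨z₁, hz₁, hb₁⟩ := h₁.forth ht
      obtain ⟨z₂, hz₂, hb₂⟩ := h₂.forth hu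
      exact ⟨.par z₁ z₂, .comm hβ hz₁ hz₂, .inl ⟨t, u, z₁, z₂, hb₁, hb₂, rfl, rfl⟩⟩

lemma par_nil (p : Tm A) : .par p .nil ∼ p := by
  refine of_forth_back (fun x y => x = .par y .nil) ?_ ?_ rfl
  · rintro x y μ x' rfl hs
    rcases Step.par_inv hs with ⟨t, ht, rfl⟩ | ⟨u, hu, -⟩ | ⟨β, t, u, -, -, hu, -⟩
    · exact ⟨t, ht, .inl rfl⟩
    · exact absurd hu Step.not_nil
    · exact absurd hu Step.not_nil
  · rintro x y μ y' rfl hs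
    exact ⟨.par y' .nil, .parL hs, .inl rfl⟩

lemma par_comm (p q : Tm A) : .par p q ∼ .par q p := by
  refine of_symm_of_forth (fun x y => ∃ p q, x = .par p q ∧ y = .par q p) ?_ ?_ ⟨p, q, rfl, rfl⟩
  · rintro x y ⟨p, q, rfl, rfl⟩
    exact ⟨q, p, rfl, rfl⟩
  · rintro x y μ x' ⟨p, q, rfl, rfl⟩ hs
    rcases Step.par_inv hs with ⟨t, ht, rfl⟩ | ⟨u, hu, rfl⟩ | ⟨β, t, u, hβ, ht, hu, rfl, rfl⟩
    · exact ⟨.par q t, .parR ht, .inl ⟨t, q, rfl, rfl⟩⟩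
    · exact ⟨.par u p, .parL hu, .inl ⟨p, u, rfl, rfl⟩⟩
    · exact ⟨.par u t, Step.comm_symm hβ ht hu, .inl ⟨t, u, rfl, rfl⟩⟩

lemma par_assoc (p q r : Tm A) : .par (.par p q) r ∼ .par p (.par q r) := by
  refine of_forth_back (fun x y => ∃ p q r, x = .par (.par p q) r ∧ y = .par p (.par q r))
    ?_ ?_ ⟨p, q, r, rfl, rfl⟩
  · rintro x y μ x' ⟨p, q, r, rfl, rfl⟩ hs
    rcases Step.par_inv hs with ⟨t, ht, rfl⟩ | ⟨u, hu, rfl⟩ | ⟨β, t, u, hβ, ht, hu, rfl, rfl⟩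
    · rcases Step.par_inv ht with ⟨a, ha, rfl⟩ | ⟨b, hb, rfl⟩ | ⟨γ, a, b, hγ, ha, hb, rfl, rfl⟩
      · exact ⟨_, .parL ha, .inl ⟨_, _, _, rfl, rfl⟩⟩
      · exact ⟨_, .parR (.parL hb), .inl ⟨_, _, _, rfl, rfl⟩⟩
      · exact ⟨_, .comm hγ ha (.parL hb), .inl ⟨_, _, _, rfl, rfl⟩⟩
    · exact ⟨_, .parR (.parR hu), .inl ⟨_, _, _, rfl, rfl⟩⟩
    · rcases Step.par_inv ht with ⟨a, ha, rfl⟩ | ⟨b, hb, rfl⟩ | ⟨γ, a, b, hγ, ha, hb, rfl, rfl⟩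
      · exact ⟨_, .comm hβ ha (.parR hu), .inl ⟨_, _, _, rfl, rfl⟩⟩
      · exact ⟨_, .parR (.comm hβ hb hu), .inl ⟨_, _, _, rfl, rfl⟩⟩
      · exact absurd rfl hβ
  · rintro x y μ y' ⟨p, q, r, rfl, rfl⟩ hs
    rcases Step.par_inv hs with ⟨t, ht, rfl⟩ | ⟨u, hu, rfl⟩ | ⟨β, t, u, hβ, ht, hu, rfl, rfl⟩
    · exact ⟨_, .parL (.parL ht), .inl ⟨_, _, _, rfl, rfl⟩⟩
    · rcases Step.par_inv hu with ⟨a, ha, rfl⟩ | ⟨b, hb, rfl⟩ | ⟨γ, a, b, hγ, ha, hb, rfl, rfl⟩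
      · exact ⟨_, .parL (.parR ha), .inl ⟨_, _, _, rfl, rfl⟩⟩
      · exact ⟨_, .parR hb, .inl ⟨_, _, _, rfl, rfl⟩⟩
      · exact ⟨_, .comm hγ (.parR ha) hb, .inl ⟨_, _, _, rfl, rfl⟩⟩
    · rcases Step.par_inv hu with ⟨a, ha, rfl⟩ | ⟨b, hb, rfl⟩ | ⟨γ, a, b, -, -, -, hco, -⟩
      · exact ⟨_, .parL (.comm hβ ht ha), .inl ⟨_, _, _, rfl, rfl⟩⟩
      · exact ⟨_, .comm hβ (.parL ht) hb, .inl ⟨_, _, _, rfl, rfl⟩⟩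
      · exact absurd hco (Act.co_ne_tau hβ)

lemma par_of_nil_right (h : q ∼ .nil) : .par p q ∼ p :=
  (par (refl p) h).trans (par_nil p)

lemma par_of_nil_left (h : p ∼ .nil) : .par p q ∼ q :=
  (par_comm p q).trans (par_of_nil_right h)

end Bisim

section StepsMatchedBy

variable {A : Type}

def StepsMatchedBy (w T : Tm A) : Prop :=
  ∀ μ d, Step w μ d → ∃ d', Step T μ d' ∧ d ∼ d'

lemma Bisim.stepsMatchedBy {w T : Tm A} (h : w ∼ T) : StepsMatchedBy w T :=
  fun _ _ => h.forth

lemma StepsMatchedBy.mono {w w' T : Tm A} (h : StepsMatchedBy w T)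
    (hsub : ∀ μ d, Step w' μ d → Step w μ d) : StepsMatchedBy w' T :=
  fun μ d hs => h μ d (hsub μ d hs)

lemma StepsMatchedBy.of_bisim {w w' T : Tm A} (h : StepsMatchedBy w T) (hw : w' ∼ w) :
    StepsMatchedBy w' T := by
  intro μ d hs
  obtain ⟨e, he, hde⟩ := hw.forth hs
  obtain ⟨d', hd', hed⟩ := h μ e he
  exact ⟨d', hd', hde.trans hed⟩

end StepsMatchedBy

/-! ## Depth, size and substitution -/

namespace Tm

variable {A : Type}

def depth : Tm A → ℕ
  | .nil | .var _ => 0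
  | .pre _ t => t.depth + 1
  | .plus t u => max t.depth u.depth
  | .par t u => t.depth + u.depth

def size : Tm A → ℕ
  | .nil | .var _ => 1
  | .pre _ t => t.size + 1
  | .plus t u | .par t u => t.size + u.size + 1

def Occurs (y : ℕ) : Tm A → Prop
  | .nil => False
  | .var x => x = y
  | .pre _ t => t.Occurs y
  | .plus t u | .par t u => t.Occurs y ∨ u.Occurs y

lemma size_pos (t : Tm A) : 0 < t.size := by
  cases t <;> simp [size]

lemma depth_lt_of_step {p q : Tm A} {μ : Act A} (h : Step p μ q) : q.depth < p.depth := by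
  induction h <;> simp only [depth] at * <;> omega

lemma exists_step_depth_succ (p : Tm A) (hp : 0 < p.depth) :
    ∃ μ q, Step p μ q ∧ q.depth + 1 = p.depth := by
  induction p with
  | nil | var => simp [depth] at hp
  | pre μ t => exact ⟨μ, t, .pre _ _, rfl⟩
  | plus t u iht ihu =>
    simp only [depth] at hp ⊢
    rcases le_total u.depth t.depth with hle | hle
    · obtain ⟨μ, q, hs, hq⟩ := iht (by omega)
      exact ⟨μ, q, .plusL hs, by omega⟩
    · obtain ⟨μ, q, hs, hq⟩ := ihu (by omega)
      exact ⟨μ, q, .plusR hs, by omega⟩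
  | par t u iht ihu =>
    simp only [depth] at hp ⊢
    by_cases ht : 0 < t.depth
    · obtain ⟨μ, q, hs, hq⟩ := iht ht
      exact ⟨μ, .par q u, .parL hs, by simp only [depth]; omega⟩
    · obtain ⟨μ, q, hs, hq⟩ := ihu (by omega)
      exact ⟨μ, .par t q, .parR hs, by simp only [depth]; omega⟩

lemma subst_congr {σ ρ : ℕ → Tm A} {w : Tm A} (h : ∀ x, w.Occurs x → ρ x = σ x) :
    subst ρ w = subst σ w := by
  induction w with
  | nil => rfl
  | var x => exact h x rfl
  | pre μ t ih => simp only [subst, ih h]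
  | plus t u iht ihu | par t u iht ihu =>
    simp only [subst, iht fun x hx => h x (.inl hx), ihu fun x hx => h x (.inr hx)]

lemma subst_of_closed (σ : ℕ → Tm A) {p : Tm A} (hp : Closed p) : subst σ p = p := by
  induction p with
  | nil => rfl
  | var x => exact hp.elim
  | pre μ t ih => simp only [subst, ih hp]
  | plus t u iht ihu | par t u iht ihu => simp only [subst, iht hp.1, ihu hp.2]

lemma closed_subst {σ : ℕ → Tm A} (hσ : ClosedSubst σ) (t : Tm A) : Closed (subst σ t) := by
  induction t with
  | nil => trivial
  | var x => exact hσ x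
  | pre μ t ih => exact ih
  | plus t u iht ihu | par t u iht ihu => exact ⟨iht, ihu⟩

lemma subst_subst (σ σ' : ℕ → Tm A) (t : Tm A) :
    subst σ (subst σ' t) = subst (fun x => subst σ (σ' x)) t := by
  induction t <;> simp_all [subst]

end Tm

lemma Bisim.depth_le {A : Type} {p q : Tm A} (h : p ∼ q) : p.depth ≤ q.depth := by
  induction hk : p.depth using Nat.strong_induction_on generalizing p q with
  | _ k ih =>
    rcases Nat.eq_zero_or_pos k with rfl | hk0
    · exact Nat.zero_le _
    obtain ⟨μ, p', hs, hd⟩ := Tm.exists_step_depth_succ p (by omega)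
    obtain ⟨q', hq', hb⟩ := h.forth hs
    have := ih p'.depth (by omega) hb rfl
    have := Tm.depth_lt_of_step hq'
    omega

lemma Bisim.depth_eq {A : Type} {p q : Tm A} (h : p ∼ q) : p.depth = q.depth :=
  le_antisymm h.depth_le h.symm.depth_le

lemma Deriv.sound {A : Type} {E : Set (Eqn A)} (hE : SystemSound Bisim E) {t u : Tm A}
    (h : Deriv E t u) (σ : ℕ → Tm A) (hσ : ClosedSubst σ) : subst σ t ∼ subst σ u := by
  induction h with
  | ax σ' he =>
    rw [Tm.subst_subst, Tm.subst_subst]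
    exact hE _ he _ fun x => Tm.closed_subst hσ (σ' x)
  | refl t => exact .refl _
  | symm _ ih => exact ih.symm
  | trans _ _ ih₁ ih₂ => exact ih₁.trans ih₂
  | pre μ _ ih => exact ih.pre μ
  | plus _ _ ih₁ ih₂ => exact ih₁.plus ih₂
  | par _ _ ih₁ ih₂ => exact ih₁.par ih₂

/-! ## Chains -/

namespace Tm

variable {A : Type}

/-- The process `aᵏ`. -/
def chain (a : A) : ℕ → Tm A
  | 0 => .nil
  | k + 1 => .pre (.name a) (chain a k)

variable {a : A} {k : ℕ}

@[simp] lemma chain_zero : chain a 0 = .nil := rfl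

lemma step_chain (a : A) (k : ℕ) : Step (chain a (k + 1)) (.name a) (chain a k) := .pre _ _

lemma step_chain_inv {μ : Act A} {d : Tm A} (h : Step (chain a k) μ d) :
    ∃ k', k = k' + 1 ∧ μ = .name a ∧ d = chain a k' := by
  cases k with
  | zero => exact absurd h Step.not_nil
  | succ k' =>
    obtain ⟨rfl, rfl⟩ := Step.pre_inv h
    exact ⟨k', rfl, rfl, rfl⟩

@[simp] lemma depth_chain (a : A) (k : ℕ) : (chain a k).depth = k := by
  induction k <;> simp_all [chain, depth]

lemma closed_chain (a : A) (k : ℕ) : Closed (chain a k) := by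
  induction k <;> simp_all [chain, Closed]

end Tm

def HasInequivDerivs {A : Type} (p : Tm A) : Prop :=
  ∃ μ₁ d₁ μ₂ d₂, Step p μ₁ d₁ ∧ Step p μ₂ d₂ ∧ ¬ d₁ ∼ d₂

namespace Bisim

open Tm

variable {A : Type} {a : A} {p q d : Tm A} {k : ℕ} {μ : Act A}

lemma depth_of_chain (h : p ∼ chain a k) : p.depth = k := by
  simpa using h.depth_eq

lemma chain_inj {i j : ℕ} (h : chain a i ∼ chain a j) : i = j := by
  simpa using h.depth_eq

lemma step_of_chain (h : p ∼ chain a k) (hs : Step p μ d) :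
    ∃ k', k = k' + 1 ∧ μ = .name a ∧ d ∼ chain a k' := by
  obtain ⟨q', hq', hb⟩ := h.forth hs
  obtain ⟨k', rfl, rfl, rfl⟩ := step_chain_inv hq'
  exact ⟨k', rfl, rfl, hb⟩

lemma chain_succ (hstep : ∃ μ d, Step p μ d)
    (hall : ∀ μ d, Step p μ d → μ = .name a ∧ d ∼ chain a k) :
    p ∼ chain a (k + 1) := by
  refine of_forth_back (fun x y => x = p ∧ y = chain a (k + 1)) ?_ ?_ ⟨rfl, rfl⟩
  · rintro x y μ x' ⟨rfl, rfl⟩ hs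
    obtain ⟨rfl, hb⟩ := hall _ _ hs
    exact ⟨_, step_chain a k, .inr hb⟩
  · rintro x y μ y' ⟨rfl, rfl⟩ hs
    obtain ⟨k', hk, rfl, rfl⟩ := step_chain_inv hs
    obtain ⟨ν, d, hd⟩ := hstep
    obtain ⟨rfl, hb⟩ := hall _ _ hd
    obtain rfl : k' = k := by omega
    exact ⟨d, hd, .inr hb⟩

lemma not_hasInequivDerivs_of_chain (h : p ∼ chain a k) : ¬ HasInequivDerivs p := by
  rintro ⟨μ₁, d₁, μ₂, d₂, h₁, h₂, hne⟩
  obtain ⟨k₁, hk₁, -, hb₁⟩ := h.step_of_chain h₁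
  obtain ⟨k₂, hk₂, -, hb₂⟩ := h.step_of_chain h₂
  obtain rfl : k₁ = k₂ := by omega
  exact hne (hb₁.trans hb₂.symm)

lemma chain_par_chain (a : A) (i j : ℕ) :
    .par (chain a i) (chain a j) ∼ chain a (i + j) := by
  refine of_forth_back (fun x y => ∃ i j, x = .par (chain a i) (chain a j) ∧ y = chain a (i + j))
    ?_ ?_ ⟨i, j, rfl, rfl⟩
  · rintro x y μ x' ⟨i, j, rfl, rfl⟩ hs
    rcases Step.par_inv hs with ⟨t', ht, rfl⟩ | ⟨u', hu, rfl⟩ | ⟨β, t', u', -, ht, hu, -⟩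
    · obtain ⟨i', rfl, rfl, rfl⟩ := step_chain_inv ht
      exact ⟨chain a (i' + j), by rw [Nat.add_right_comm]; exact step_chain a _,
        .inl ⟨i', j, rfl, rfl⟩⟩
    · obtain ⟨j', rfl, rfl, rfl⟩ := step_chain_inv hu
      exact ⟨chain a (i + j'), step_chain a _, .inl ⟨i, j', rfl, rfl⟩⟩
    · obtain ⟨-, -, rfl, -⟩ := step_chain_inv ht
      obtain ⟨-, -, hco, -⟩ := step_chain_inv hu
      simp at hco
  · rintro x y μ y' ⟨i, j, rfl, rfl⟩ hs
    obtain ⟨m, hm, rfl, rfl⟩ := step_chain_inv hs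
    rcases i with _ | i
    · obtain ⟨j, rfl⟩ : ∃ j', j = j' + 1 := ⟨j - 1, by omega⟩
      exact ⟨_, .parR (step_chain a j), .inl ⟨0, j, rfl, by congr 1; omega⟩⟩
    · exact ⟨_, .parL (step_chain a i), .inl ⟨i, j, rfl, by congr 1; omega⟩⟩

lemma chain_of_par_chain_left {r : Tm A} (h : .par p r ∼ chain a k) :
    p ∼ chain a p.depth := by
  refine of_forth_back (fun x y => ∃ t k, .par x t ∼ chain a k ∧ y = chain a x.depth)
    ?_ ?_ ⟨r, k, h, rfl⟩
  · rintro x y μ x' ⟨t, k, hpar, rfl⟩ hs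
    obtain ⟨k', rfl, rfl, hb⟩ := hpar.step_of_chain (.parL hs (u := t))
    have h₁ := hpar.depth_of_chain
    have h₂ := hb.depth_of_chain
    simp only [depth] at h₁ h₂
    exact ⟨chain a x'.depth, by rw [show x.depth = x'.depth + 1 by omega]; exact step_chain a _,
      .inl ⟨t, k', hb, rfl⟩⟩
  · rintro x y μ y' ⟨t, k, hpar, rfl⟩ hs
    obtain ⟨m, hm, rfl, rfl⟩ := step_chain_inv hs
    obtain ⟨ν, x', hs', hd'⟩ := exists_step_depth_succ x (by omega)
    obtain ⟨k', -, rfl, hb⟩ := hpar.step_of_chain (.parL hs' (u := t))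
    obtain rfl : m = x'.depth := by omega
    exact ⟨x', hs', .inl ⟨t, k', hb, rfl⟩⟩

lemma chains_of_par_chain (h : .par p q ∼ chain a k) :
    p ∼ chain a p.depth ∧ q ∼ chain a q.depth ∧ p.depth + q.depth = k :=
  ⟨chain_of_par_chain_left h, chain_of_par_chain_left ((par_comm q p).trans h),
    by simpa [depth] using h.depth_of_chain⟩

end Bisim

lemma HasInequivDerivs.of_bisim {A : Type} {p q : Tm A} (hp : HasInequivDerivs p)
    (h : p ∼ q) : HasInequivDerivs q := by
  obtain ⟨μ₁, d₁, μ₂, d₂, h₁, h₂, hne⟩ := hp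
  obtain ⟨e₁, he₁, hb₁⟩ := h.forth h₁
  obtain ⟨e₂, he₂, hb₂⟩ := h.forth h₂
  exact ⟨μ₁, e₁, μ₂, e₂, he₁, he₂, fun he => hne (hb₁.trans (he.trans hb₂.symm))⟩

lemma not_hasInequivDerivs_nil {A : Type} : ¬ HasInequivDerivs (.nil : Tm A) := by
  rintro ⟨_, _, _, _, h, -⟩
  exact Step.not_nil h

lemma not_hasInequivDerivs_pre {A : Type} {μ : Act A} {t : Tm A} :
    ¬ HasInequivDerivs (.pre μ t) := by
  rintro ⟨_, _, _, _, h₁, h₂, hne⟩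
  obtain ⟨-, rfl⟩ := Step.pre_inv h₁
  obtain ⟨-, rfl⟩ := Step.pre_inv h₂
  exact hne (.refl _)

section sumF

variable {A : Type} {g : ℕ → Tm A}

lemma step_sumF_inv {m : ℕ} {μ : Act A} {d : Tm A} (h : Step (sumF g m) μ d) :
    ∃ i, 1 ≤ i ∧ i ≤ m ∧ Step (g i) μ d := by
  induction m using Nat.strong_induction_on with
  | _ m ih =>
    match m, h with
    | 0, h => exact absurd h Step.not_nil
    | 1, h => exact ⟨1, le_rfl, le_rfl, h⟩
    | m + 2, h =>
      rcases Step.plus_inv h with h | h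
      · obtain ⟨i, h₁, h₂, h₃⟩ := ih (m + 1) (by omega) h
        exact ⟨i, h₁, by omega, h₃⟩
      · exact ⟨m + 2, by omega, le_rfl, h⟩

lemma step_sumF {m i : ℕ} {μ : Act A} {d : Tm A} (h₁ : 1 ≤ i) (h₂ : i ≤ m)
    (h : Step (g i) μ d) : Step (sumF g m) μ d := by
  induction m using Nat.strong_induction_on with
  | _ m ih =>
    match m, h₂ with
    | 0, h₂ => omega
    | 1, _ =>
      obtain rfl : i = 1 := by omega
      exact h
    | m + 2, h₂ =>
      rcases Nat.lt_or_ge i (m + 2) with hi | hi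
      · exact .plusL (ih (m + 1) (by omega) (by omega))
      · obtain rfl : i = m + 2 := by omega
        exact .plusR h

lemma closed_sumF (hg : ∀ i, Closed (g i)) (m : ℕ) : Closed (sumF g m) := by
  induction m using Nat.strong_induction_on with
  | _ m ih =>
    match m with
    | 0 => trivial
    | 1 => exact hg 1
    | m + 2 => exact ⟨ih (m + 1) (by omega), hg _⟩

end sumF

/-! ## Summands and paths to variables -/

section Summands

variable {A : Type}

def Tm.NotPlus : Tm A → Prop
  | .plus _ _ => False
  | _ => True

def Tm.NotVar : Tm A → Prop
  | .var _ => False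
  | _ => True

lemma Tm.NotPlus.subst {σ : ℕ → Tm A} {s : Tm A} (h : s.NotPlus) (hs : s.NotVar) :
    (subst σ s).NotPlus := by
  cases s <;> simp_all [Tm.NotPlus, Tm.NotVar, _root_.subst]

inductive IsSummand : Tm A → Tm A → Prop
  | refl {s : Tm A} : s.NotPlus → IsSummand s s
  | plusL {s p q : Tm A} : IsSummand s p → IsSummand s (.plus p q)
  | plusR {s p q : Tm A} : IsSummand s q → IsSummand s (.plus p q)

namespace IsSummand

variable {s p : Tm A}

lemma step (h : IsSummand s p) {μ : Act A} {d : Tm A} (hs : Step s μ d) : Step p μ d := by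
  induction h with
  | refl => exact hs
  | plusL _ ih => exact .plusL ih
  | plusR _ ih => exact .plusR ih

lemma size_le (h : IsSummand s p) : s.size ≤ p.size := by
  induction h with
  | refl => exact le_rfl
  | plusL _ ih | plusR _ ih => simp only [Tm.size]; omega

lemma subst (σ : ℕ → Tm A) (h : IsSummand s p) (hs : s.NotVar) :
    IsSummand (subst σ s) (subst σ p) := by
  induction h with
  | refl hp => exact .refl (hp.subst hs)
  | plusL _ ih => exact .plusL ih
  | plusR _ ih => exact .plusR ih

lemma subst_var {σ : ℕ → Tm A} {y : ℕ} (h : IsSummand (.var y) p) (hs : IsSummand s (σ y)) :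
    IsSummand s (_root_.subst σ p) := by
  induction h with
  | refl => exact hs
  | plusL _ ih => exact .plusL ih
  | plusR _ ih => exact .plusR ih

lemma step_subst_var {σ : ℕ → Tm A} {y : ℕ} (h : IsSummand (.var y) p) {μ : Act A}
    {d : Tm A} (hs : Step (σ y) μ d) : Step (_root_.subst σ p) μ d := by
  induction h with
  | refl => exact hs
  | plusL _ ih => exact .plusL ih
  | plusR _ ih => exact .plusR ih

lemma of_subst {σ : ℕ → Tm A} {v : Tm A} (h : IsSummand s (_root_.subst σ v)) :
    ∃ v₀, IsSummand v₀ v ∧ ((∃ x, v₀ = .var x ∧ IsSummand s (σ x)) ∨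
      (s = _root_.subst σ v₀ ∧ v₀.NotPlus ∧ v₀.NotVar)) := by
  induction v with
  | var x => exact ⟨.var x, .refl trivial, .inl ⟨x, rfl, h⟩⟩
  | plus t u iht ihu =>
    cases h with
    | refl hnp => exact hnp.elim
    | plusL h =>
      obtain ⟨v₀, h₁, h₂⟩ := iht h
      exact ⟨v₀, .plusL h₁, h₂⟩
    | plusR h =>
      obtain ⟨v₀, h₁, h₂⟩ := ihu h
      exact ⟨v₀, .plusR h₁, h₂⟩
  | nil | pre | par => cases h; exact ⟨_, .refl trivial, .inr ⟨rfl, trivial, trivial⟩⟩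

lemma of_sumF {g : ℕ → Tm A} {m : ℕ} (hm : 1 ≤ m) (h : IsSummand s (sumF g m)) :
    ∃ i, IsSummand s (g i) := by
  induction m using Nat.strong_induction_on with
  | _ m ih =>
    match m, h with
    | 1, h => exact ⟨1, h⟩
    | m + 2, h =>
      cases h with
      | refl h => exact h.elim
      | plusL h => exact ih (m + 1) (by omega) (by omega) h
      | plusR h => exact ⟨m + 2, h⟩

end IsSummand

lemma Bisim.of_summand {w s T : Tm A} (hw : StepsMatchedBy w T) (hs : IsSummand s w)
    (hsT : s ∼ T) : w ∼ T := by
  refine Bisim.of_forth_back (fun x y => x = w ∧ y = T) ?_ ?_ ⟨rfl, rfl⟩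
  · rintro x y μ x' ⟨rfl, rfl⟩ hstep
    obtain ⟨d', hd', hb⟩ := hw _ _ hstep
    exact ⟨d', hd', .inr hb⟩
  · rintro x y μ y' ⟨rfl, rfl⟩ hstep
    obtain ⟨d, hd, hb⟩ := hsT.back hstep
    exact ⟨d, hs.step hd, .inr hb⟩

lemma HasInequivDerivs.of_summand {s p : Tm A} (h : HasInequivDerivs s)
    (hs : IsSummand s p) : HasInequivDerivs p := by
  obtain ⟨μ₁, d₁, μ₂, d₂, h₁, h₂, hne⟩ := h
  exact ⟨μ₁, d₁, μ₂, d₂, hs.step h₁, hs.step h₂, hne⟩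

end Summands

section Occurs

variable {A : Type} {ρ : ℕ → Tm A} {y : ℕ} {w : Tm A}

lemma exists_step_subst_of_occurs (hy : ∃ μ d, Step (ρ y) μ d) (hocc : w.Occurs y) :
    ∃ μ d, Step (subst ρ w) μ d := by
  induction w with
  | nil => exact hocc.elim
  | var x =>
    obtain rfl : x = y := hocc
    exact hy
  | pre μ t => exact ⟨μ, _, .pre _ _⟩
  | plus t u iht ihu =>
    rcases hocc with hocc | hocc
    · obtain ⟨μ, d, hd⟩ := iht hocc
      exact ⟨μ, d, .plusL hd⟩
    · obtain ⟨μ, d, hd⟩ := ihu hocc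
      exact ⟨μ, d, .plusR hd⟩
  | par t u iht ihu =>
    rcases hocc with hocc | hocc
    · obtain ⟨μ, d, hd⟩ := iht hocc
      exact ⟨μ, _, .parL hd⟩
    · obtain ⟨μ, d, hd⟩ := ihu hocc
      exact ⟨μ, _, .parR hd⟩

lemma Bisim.chain_of_matched {a : A} {k : ℕ} (hw : ∃ μ d, Step w μ d)
    (h : StepsMatchedBy w (Tm.chain a k)) : w ∼ Tm.chain a k := by
  obtain ⟨μ, d, hd⟩ := hw
  obtain ⟨d', hd', -⟩ := h _ _ hd
  obtain ⟨k, rfl, rfl, rfl⟩ := Tm.step_chain_inv hd'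
  refine Bisim.chain_succ ⟨_, _, hd⟩ fun μ e he => ?_
  obtain ⟨e', he', hb⟩ := h _ _ he
  obtain ⟨k', hk', rfl, rfl⟩ := Tm.step_chain_inv he'
  obtain rfl : k' = k := by omega
  exact ⟨rfl, hb⟩

lemma not_bisim_chain_of_occurs (hy : HasInequivDerivs (ρ y)) (hocc : w.Occurs y) {a : A}
    {k : ℕ} : ¬ subst ρ w ∼ Tm.chain a k := by
  have hstep : ∃ μ d, Step (ρ y) μ d := by
    obtain ⟨μ, d, -, -, hd, -⟩ := hy
    exact ⟨μ, d, hd⟩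
  induction w generalizing k with
  | nil => exact hocc.elim
  | var x =>
    obtain rfl : x = y := hocc
    exact fun h => h.not_hasInequivDerivs_of_chain hy
  | pre ν t ih =>
    intro h
    obtain ⟨k', -, -, hc⟩ := h.step_of_chain (.pre ν (subst ρ t))
    exact ih hocc hc
  | plus t u iht ihu =>
    intro h
    rcases hocc with hocc | hocc
    · exact iht hocc (.chain_of_matched (exists_step_subst_of_occurs hstep hocc)
        (h.stepsMatchedBy.mono fun _ _ => .plusL))
    · exact ihu hocc (.chain_of_matched (exists_step_subst_of_occurs hstep hocc)
        (h.stepsMatchedBy.mono fun _ _ => .plusR))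
  | par t u iht ihu =>
    intro h
    rcases hocc with hocc | hocc
    · exact iht hocc h.chains_of_par_chain.1
    · exact ihu hocc h.chains_of_par_chain.2.1

end Occurs

section VarPath

variable {A : Type}

/-- `L` lists the parallel siblings passed on the way from `v` down to the variable `y`. -/
inductive VarPath (y : ℕ) : Tm A → List (Tm A) → Prop
  | var {v : Tm A} : IsSummand (.var y) v → VarPath y v []
  | parL {v v₁ v₂ : Tm A} {L : List (Tm A)} : IsSummand (.par v₁ v₂) v → VarPath y v₁ L →
      VarPath y v (v₂ :: L)
  | parR {v v₁ v₂ : Tm A} {L : List (Tm A)} : IsSummand (.par v₁ v₂) v → VarPath y v₂ L →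
      VarPath y v (v₁ :: L)

def parFold (d : Tm A) : List (Tm A) → Tm A
  | [] => d
  | c :: L => .par (parFold d L) c

namespace VarPath

variable {y : ℕ} {v t u : Tm A} {L : List (Tm A)}

lemma plusL (h : VarPath y t L) : VarPath y (.plus t u) L := by
  cases h with
  | var h => exact .var (.plusL h)
  | parL h₁ h₂ => exact .parL (.plusL h₁) h₂
  | parR h₁ h₂ => exact .parR (.plusL h₁) h₂

lemma plusR (h : VarPath y u L) : VarPath y (.plus t u) L := by
  cases h with
  | var h => exact .var (.plusR h)
  | parL h₁ h₂ => exact .parL (.plusR h₁) h₂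
  | parR h₁ h₂ => exact .parR (.plusR h₁) h₂

lemma lift_step (h : VarPath y v L) (ρ : ℕ → Tm A) {μ : Act A} {d : Tm A}
    (hd : Step (ρ y) μ d) : ∃ z, Step (subst ρ v) μ z ∧ z ∼ parFold d (L.map (subst ρ)) := by
  induction h with
  | var h => exact ⟨d, h.step_subst_var hd, .refl d⟩
  | parL h₁ _ ih =>
    obtain ⟨z, hz, hb⟩ := ih
    exact ⟨_, (h₁.subst ρ trivial).step (.parL hz), hb.par (.refl _)⟩
  | parR h₁ _ ih =>
    obtain ⟨z, hz, hb⟩ := ih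
    exact ⟨_, (h₁.subst ρ trivial).step (.parR hz), (Bisim.par_comm _ _).trans (hb.par (.refl _))⟩

end VarPath

def ChainSiblings (a : A) (σ : ℕ → Tm A) (L : List (Tm A)) : Prop :=
  ∀ c ∈ L, subst σ c ∼ Tm.chain a (subst σ c).depth

def siblingsDepth (σ : ℕ → Tm A) (L : List (Tm A)) : ℕ :=
  (L.map fun c => (subst σ c).depth).sum

@[simp] lemma siblingsDepth_nil (σ : ℕ → Tm A) : siblingsDepth σ [] = 0 := rfl

@[simp] lemma siblingsDepth_cons (σ : ℕ → Tm A) (c : Tm A) (L : List (Tm A)) :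
    siblingsDepth σ (c :: L) = (subst σ c).depth + siblingsDepth σ L := rfl

lemma ChainSiblings.bisim_parFold {a : A} {σ : ℕ → Tm A} {L : List (Tm A)}
    (hL : ChainSiblings a σ L) {d d' : Tm A} (hd : d ∼ d') :
    parFold d (L.map (subst σ)) ∼ .par d' (Tm.chain a (siblingsDepth σ L)) := by
  induction L with
  | nil => exact hd.trans (Bisim.par_nil d').symm
  | cons c L ih =>
    have hc := hL c List.mem_cons_self
    have ih := ih fun c hc => hL c (List.mem_cons_of_mem _ hc)
    refine ((ih.par hc).trans (Bisim.par_assoc _ _ _)).trans ((Bisim.refl d').par ?_)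
    simpa [Nat.add_comm] using Bisim.chain_par_chain a (siblingsDepth σ L) (subst σ c).depth

lemma ChainSiblings.cons {a : A} {σ : ℕ → Tm A} {c : Tm A} {L : List (Tm A)}
    {j : ℕ} (hc : subst σ c ∼ Tm.chain a j) (hL : ChainSiblings a σ L) :
    ChainSiblings a σ (c :: L) :=
  List.forall_mem_cons.mpr ⟨by rwa [hc.depth_of_chain], hL⟩

lemma VarPath.hasInequivDerivs {a : A} {σ : ℕ → Tm A} {y : ℕ} {v : Tm A}
    {L : List (Tm A)} (h : VarPath y v L) (hL : ChainSiblings a σ L)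
    (hy : HasInequivDerivs (σ y))
    (hv : ∀ μ z, Step (subst σ v) μ z → z ∼ Tm.chain a z.depth) :
    HasInequivDerivs (subst σ v) := by
  obtain ⟨μ₁, d₁, μ₂, d₂, h₁, h₂, hne⟩ := hy
  obtain ⟨z₁, hz₁, hb₁⟩ := h.lift_step σ h₁
  obtain ⟨z₂, hz₂, hb₂⟩ := h.lift_step σ h₂
  refine ⟨μ₁, z₁, μ₂, z₂, hz₁, hz₂, fun hz => hne ?_⟩
  obtain ⟨e₁, -, hd₁⟩ :=
    ((hb₁.trans (hL.bisim_parFold (.refl d₁))).symm.trans (hv _ _ hz₁)).chains_of_par_chain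
  obtain ⟨e₂, -, hd₂⟩ :=
    ((hb₂.trans (hL.bisim_parFold (.refl d₂))).symm.trans (hv _ _ hz₂)).chains_of_par_chain
  have := hz.depth_eq
  simp only [Tm.depth_chain] at hd₁ hd₂
  exact e₁.trans ((show d₁.depth = d₂.depth by omega) ▸ e₂.symm)

end VarPath

section Pigeonhole

open Tm

variable {A : Type} {a : A}

def ChainDerivs (a : A) (w : Tm A) (K : Finset ℕ) : Prop :=
  ∀ k ∈ K, ∃ d, Step w (.name a) d ∧ d ∼ chain a k

lemma ChainDerivs.split_plus {X Y : Tm A} {K : Finset ℕ} (hK : ChainDerivs a (.plus X Y) K) :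
    ∃ K₁ K₂ : Finset ℕ, ChainDerivs a X K₁ ∧ ChainDerivs a Y K₂ ∧ K₁.card + K₂.card = K.card := by
  classical
  let P k := ∃ d, Step X (.name a) d ∧ d ∼ chain a k
  refine ⟨K.filter P, K.filter (¬ P ·), fun k hk => (Finset.mem_filter.mp hk).2, fun k hk => ?_,
    Finset.card_filter_add_card_filter_not P⟩
  obtain ⟨hk, hnot⟩ := Finset.mem_filter.mp hk
  obtain ⟨d, hd, hb⟩ := hK k hk
  exact (Step.plus_inv hd).elim (fun hd => absurd ⟨d, hd, hb⟩ hnot) fun hd => ⟨d, hd, hb⟩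

lemma ChainDerivs.split_par {X Y : Tm A} {K : Finset ℕ} (hK : ChainDerivs a (.par X Y) K) :
    ∃ K₁ K₂ : Finset ℕ, (∀ k ∈ K₁, ∃ d, Step X (.name a) d ∧ .par d Y ∼ chain a k) ∧
      (∀ k ∈ K₂, ∃ d, Step Y (.name a) d ∧ .par d X ∼ chain a k) ∧
      K₁.card + K₂.card = K.card := by
  classical
  let P k := ∃ d, Step X (.name a) d ∧ .par d Y ∼ chain a k
  refine ⟨K.filter P, K.filter (¬ P ·), fun k hk => (Finset.mem_filter.mp hk).2, fun k hk => ?_,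
    Finset.card_filter_add_card_filter_not P⟩
  obtain ⟨hk, hnot⟩ := Finset.mem_filter.mp hk
  obtain ⟨d, hd, hb⟩ := hK k hk
  rcases Step.par_inv hd with ⟨d', hd', rfl⟩ | ⟨d', hd', rfl⟩ | ⟨-, -, -, -, -, -, htau, -⟩
  · exact absurd ⟨d', hd', hb⟩ hnot
  · exact ⟨d', hd', (Bisim.par_comm _ _).trans hb⟩
  · cases htau

lemma ChainDerivs.of_par_left {X Y : Tm A} {K : Finset ℕ}
    (hK : ∀ k ∈ K, ∃ d, Step X (.name a) d ∧ .par d Y ∼ chain a k) (hne : K.Nonempty) :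
    Y ∼ chain a Y.depth ∧ ∃ K', ChainDerivs a X K' ∧ K'.card = K.card := by
  classical
  have hsplit : ∀ k ∈ K, Y.depth ≤ k ∧ ∃ d, Step X (.name a) d ∧ d ∼ chain a (k - Y.depth) := by
    intro k hk
    obtain ⟨d, hd, hb⟩ := hK k hk
    obtain ⟨hd', -, hsum⟩ := hb.chains_of_par_chain
    exact ⟨by omega, d, hd, by rwa [show k - Y.depth = d.depth by omega]⟩
  obtain ⟨k₀, hk₀⟩ := hne
  obtain ⟨d₀, -, hb₀⟩ := hK k₀ hk₀
  refine ⟨hb₀.chains_of_par_chain.2.1, K.image (· - Y.depth), ?_, ?_⟩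
  · simp only [ChainDerivs, Finset.mem_image, forall_exists_index, and_imp]
    rintro _ k hk rfl
    exact (hsplit k hk).2
  · refine Finset.card_image_of_injOn fun k₁ hk₁ k₂ hk₂ heq => ?_
    have := (hsplit k₁ hk₁).1
    have := (hsplit k₂ hk₂).1
    omega

lemma ChainDerivs.hasInequivDerivs {w : Tm A} {K : Finset ℕ} (hK : ChainDerivs a w K)
    (hcard : 1 < K.card) : HasInequivDerivs w := by
  obtain ⟨k₁, hk₁, k₂, hk₂, hne⟩ := Finset.one_lt_card.mp hcard
  obtain ⟨d₁, hd₁, hb₁⟩ := hK k₁ hk₁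
  obtain ⟨d₂, hd₂, hb₂⟩ := hK k₂ hk₂
  exact ⟨_, d₁, _, d₂, hd₁, hd₂, fun h => hne (hb₁.symm.trans (h.trans hb₂)).chain_inj⟩

/-- Pigeonhole on the symbols of `v`. -/
lemma exists_varPath_of_size_lt_card (σ : ℕ → Tm A) (v : Tm A) {K : Finset ℕ}
    (hK : ChainDerivs a (subst σ v) K) (hcard : v.size < K.card) :
    ∃ y L, VarPath y v L ∧ ChainSiblings a σ L ∧ HasInequivDerivs (σ y) := by
  induction v generalizing K with
  | nil => exact absurd (hK.hasInequivDerivs hcard) not_hasInequivDerivs_nil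
  | var x => exact ⟨x, [], .var (.refl trivial), by simp [ChainSiblings], hK.hasInequivDerivs hcard⟩
  | pre ν t =>
    have : 1 < K.card := by have := t.size_pos; simp only [size] at hcard; omega
    exact absurd (hK.hasInequivDerivs this) not_hasInequivDerivs_pre
  | plus t u iht ihu =>
    obtain ⟨K₁, K₂, hK₁, hK₂, hcard'⟩ := hK.split_plus
    simp only [size] at hcard
    by_cases ht : t.size < K₁.card
    · obtain ⟨y, L, hp, hL, hy⟩ := iht hK₁ ht
      exact ⟨y, L, hp.plusL, hL, hy⟩
    · obtain ⟨y, L, hp, hL, hy⟩ := ihu hK₂ (by omega)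
      exact ⟨y, L, hp.plusR, hL, hy⟩
  | par t u iht ihu =>
    obtain ⟨K₁, K₂, hK₁, hK₂, hcard'⟩ := hK.split_par
    simp only [size] at hcard
    by_cases ht : t.size < K₁.card
    · obtain ⟨hu, K', hK', hK'card⟩ := ChainDerivs.of_par_left hK₁ (Finset.card_pos.mp (by omega))
      obtain ⟨y, L, hp, hL, hy⟩ := iht hK' (by omega)
      exact ⟨y, u :: L, .parL (.refl trivial) hp, List.forall_mem_cons.mpr ⟨hu, hL⟩, hy⟩
    · obtain ⟨ht', K', hK', hK'card⟩ := ChainDerivs.of_par_left hK₂ (Finset.card_pos.mp (by omega))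
      obtain ⟨y, L, hp, hL, hy⟩ := ihu hK' (by omega)
      exact ⟨y, t :: L, .parR (.refl trivial) hp, List.forall_mem_cons.mpr ⟨ht', hL⟩, hy⟩

end Pigeonhole

section Probe

open Tm

variable {A : Type} {a : A} {σ ρ : ℕ → Tm A} {y N D : ℕ}

lemma lt_depth_of_step_of_not_occurs (hρx : ∀ x, x ≠ y → ρ x = σ x) {w : Tm A}
    (hocc : ¬ w.Occurs y) {μ : Act A} {r : Tm A} {m : ℕ} (hs : Step (subst ρ w) μ r)
    (hr : r ∼ chain a m) : m < (subst σ w).depth := by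
  rw [subst_congr fun x hx => hρx x (by rintro rfl; exact hocc hx)] at hs
  exact hr.depth_of_chain ▸ depth_lt_of_step hs

lemma chains_of_par_subst_chain (hρx : ∀ x, x ≠ y → ρ x = σ x) (hy : HasInequivDerivs (ρ y))
    {r u : Tm A} {m : ℕ} (h : .par r (subst ρ u) ∼ chain a m) :
    r ∼ chain a r.depth ∧ subst σ u ∼ chain a (subst σ u).depth ∧
      r.depth + (subst σ u).depth = m := by
  obtain ⟨hr, hu, hsum⟩ := h.chains_of_par_chain
  have hocc : ¬ u.Occurs y := fun hocc => not_bisim_chain_of_occurs hy hocc hu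
  rw [subst_congr fun x hx => hρx x (by rintro rfl; exact hocc hx)] at hu hsum
  exact ⟨hr, hu, hsum⟩

lemma eq_of_deep_step_plus_chain {p r : Tm A} {m : ℕ} (hp : p.depth < D)
    (hs : Step (.plus p (chain a (N + 1))) (.name a) r) (hr : r ∼ chain a m) (hm : D ≤ m) :
    m = N := by
  rcases Step.plus_inv hs with hs | hs
  · have := depth_lt_of_step hs
    have := hr.depth_of_chain
    omega
  · obtain ⟨k, hk, -, rfl⟩ := step_chain_inv hs
    have := hr.chain_inj
    omega

/-- A chain derivative of `ρ w` this deep can only come from the new summand `aᴺ⁺¹` of `ρ y`. -/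
lemma exists_varPath_of_deep_step (hρy : ρ y = .plus (σ y) (chain a (N + 1)))
    (hρx : ∀ x, x ≠ y → ρ x = σ x) (hy : HasInequivDerivs (σ y)) {w : Tm A}
    (hdepth : (subst σ w).depth < D) {r : Tm A} {m : ℕ} (hs : Step (subst ρ w) (.name a) r)
    (hr : r ∼ chain a m) (hm : D * w.size ≤ m) :
    ∃ L, VarPath y w L ∧ ChainSiblings a σ L ∧ m = N + siblingsDepth σ L := by
  have hyρ : HasInequivDerivs (ρ y) := by
    obtain ⟨μ₁, d₁, μ₂, d₂, h₁, h₂, hne⟩ := hy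
    exact ⟨μ₁, d₁, μ₂, d₂, hρy ▸ .plusL h₁, hρy ▸ .plusL h₂, hne⟩
  induction w generalizing r m with
  | nil => exact absurd hs Step.not_nil
  | var x =>
    by_cases hx : x = y
    · subst hx
      simp only [subst, size, mul_one] at hdepth hm
      exact ⟨[], .var (.refl trivial), by simp [ChainSiblings],
        by simpa using eq_of_deep_step_plus_chain hdepth (hρy ▸ hs) hr hm⟩
    · have := lt_depth_of_step_of_not_occurs hρx (w := .var x) hx hs hr
      simp only [size] at hm
      omega
  | pre ν t =>
    by_cases ht : t.Occurs y
    · obtain ⟨-, rfl⟩ := Step.pre_inv hs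
      exact (not_bisim_chain_of_occurs hyρ ht hr).elim
    · have := lt_depth_of_step_of_not_occurs hρx (w := .pre ν t) ht hs hr
      have := Nat.le_mul_of_pos_right D (size_pos (.pre ν t))
      omega
  | plus t u iht ihu =>
    simp only [subst, depth, size] at hdepth hm
    have hsize : D * (t.size + u.size + 1) = D * t.size + D * u.size + D := by ring
    rcases Step.plus_inv hs with hs | hs
    · obtain ⟨L, hp, hL, hmL⟩ := iht (by omega) hs hr (by omega)
      exact ⟨L, hp.plusL, hL, hmL⟩
    · obtain ⟨L, hp, hL, hmL⟩ := ihu (by omega) hs hr (by omega)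
      exact ⟨L, hp.plusR, hL, hmL⟩
  | par t u iht ihu =>
    simp only [subst, depth, size] at hdepth hm
    have hsize : D * (t.size + u.size + 1) = D * t.size + D * u.size + D := by ring
    rcases Step.par_inv hs with ⟨r₁, hr₁, rfl⟩ | ⟨r₂, hr₂, rfl⟩ | ⟨-, -, -, -, -, -, htau, -⟩
    · obtain ⟨hc₁, hc₂, hsum⟩ := chains_of_par_subst_chain hρx hyρ hr
      obtain ⟨L, hp, hL, hmL⟩ := iht (by omega) hr₁ hc₁ (by omega)
      exact ⟨u :: L, .parL (.refl trivial) hp, hL.cons hc₂, by simp; omega⟩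
    · obtain ⟨hc₂, hc₁, hsum⟩ := chains_of_par_subst_chain hρx hyρ ((Bisim.par_comm _ _).trans hr)
      obtain ⟨L, hp, hL, hmL⟩ := ihu (by omega) hr₂ hc₂ (by omega)
      exact ⟨t :: L, .parR (.refl trivial) hp, hL.cons hc₁, by simp; omega⟩
    · cases htau

end Probe

/-! ## The processes `(a¹ + ⋯ + aⁿ) ‖ aˡ` -/

namespace Moller

open Tm

variable {A : Type} {a : A} {n : ℕ}

def chainSum (a : A) (n : ℕ) : Tm A := sumF (chain a) n

def chainSumPar (a : A) (n l : ℕ) : Tm A := .par (chainSum a n) (chain a l)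

lemma step_chainSum_inv {μ : Act A} {d : Tm A} (h : Step (chainSum a n) μ d) :
    μ = .name a ∧ ∃ j < n, d = chain a j := by
  obtain ⟨i, h₁, h₂, h₃⟩ := step_sumF_inv h
  obtain ⟨k, rfl, rfl, rfl⟩ := step_chain_inv h₃
  exact ⟨rfl, k, by omega, rfl⟩

lemma step_chainSum {j : ℕ} (hj : j < n) : Step (chainSum a n) (.name a) (chain a j) :=
  step_sumF (i := j + 1) (by omega) (by omega) (step_chain a j)

lemma depth_chainSum (a : A) (n : ℕ) : (chainSum a n).depth = n := by
  induction n using Nat.strong_induction_on with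
  | _ n ih =>
    match n with
    | 0 => rfl
    | 1 => simp [chainSum, sumF]
    | n + 2 =>
      have := ih (n + 1) (by omega)
      simp_all [chainSum, sumF, depth]

lemma depth_chainSumPar (a : A) (n l : ℕ) : (chainSumPar a n l).depth = n + l := by
  simp [chainSumPar, depth, depth_chainSum]

lemma closed_chainSum (a : A) (n : ℕ) : Closed (chainSum a n) :=
  closed_sumF (closed_chain a) n

lemma closed_chainSumPar (a : A) (n l : ℕ) : Closed (chainSumPar a n l) :=
  ⟨closed_chainSum a n, closed_chain a l⟩

variable {l : ℕ} {p d : Tm A} {μ : Act A}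

lemma step_chainSumPar_inv (h : Step (chainSumPar a n l) μ d) :
    μ = .name a ∧ ((∃ j < n, d = .par (chain a j) (chain a l)) ∨
      (∃ l', l = l' + 1 ∧ d = chainSumPar a n l')) := by
  rcases Step.par_inv h with ⟨t', ht, rfl⟩ | ⟨u', hu, rfl⟩ | ⟨β, t', u', -, ht, hu, -⟩
  · obtain ⟨rfl, j, hj, rfl⟩ := step_chainSum_inv ht
    exact ⟨rfl, .inl ⟨j, hj, rfl⟩⟩
  · obtain ⟨l', rfl, rfl, rfl⟩ := step_chain_inv hu
    exact ⟨rfl, .inr ⟨l', rfl, rfl⟩⟩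
  · obtain ⟨rfl, -⟩ := step_chainSum_inv ht
    obtain ⟨-, -, hco, -⟩ := step_chain_inv hu
    simp at hco

lemma step_of_matched_chainSumPar (h : StepsMatchedBy p (chainSumPar a n l))
    (hs : Step p μ d) :
    μ = .name a ∧ ((∃ j < n, d ∼ chain a (j + l)) ∨
      (∃ l', l = l' + 1 ∧ d ∼ chainSumPar a n l')) := by
  obtain ⟨q', hq', hb⟩ := h _ _ hs
  obtain ⟨rfl, ⟨j, hj, rfl⟩ | ⟨l', rfl, rfl⟩⟩ := step_chainSumPar_inv hq'
  · exact ⟨rfl, .inl ⟨j, hj, hb.trans (.chain_par_chain a j l)⟩⟩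
  · exact ⟨rfl, .inr ⟨l', rfl, hb⟩⟩

lemma exists_step_chain_of_bisim_chainSumPar {j : ℕ} (hj : j < n)
    (h : p ∼ chainSumPar a n l) : ∃ d, Step p (.name a) d ∧ d ∼ chain a (j + l) := by
  obtain ⟨d, hd, hb⟩ := h.back (.parL (step_chainSum hj))
  exact ⟨d, hd, hb.trans (.chain_par_chain a j l)⟩

lemma exists_step_of_bisim_chainSumPar_succ (h : p ∼ chainSumPar a n (l + 1)) :
    ∃ d, Step p (.name a) d ∧ d ∼ chainSumPar a n l :=
  h.back (.parR (step_chain a l))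

lemma hasInequivDerivs_chainSumPar (hn : 2 ≤ n) (l : ℕ) :
    HasInequivDerivs (chainSumPar a n l) := by
  refine ⟨_, _, _, _, .parL (step_chainSum (j := 0) (by omega)),
    .parL (step_chainSum (j := n - 1) (by omega)), fun h => ?_⟩
  have := h.depth_eq
  simp [depth] at this
  omega

lemma not_bisim_chain_of_bisim_chainSumPar (hn : 2 ≤ n) {k : ℕ}
    (h : p ∼ chainSumPar a n l) : ¬ p ∼ chain a k := fun hk =>
  hk.not_hasInequivDerivs_of_chain ((hasInequivDerivs_chainSumPar hn l).of_bisim h.symm)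

lemma chainSumPar_inj {l' : ℕ} (h : chainSumPar a n l ∼ chainSumPar a n l') :
    l = l' := by
  have := h.depth_eq
  simp only [depth_chainSumPar] at this
  omega

lemma cancel_chain (hn : 2 ≤ n) (j : ℕ) {m : ℕ}
    (h : .par p (chain a j) ∼ chainSumPar a n m) :
    j ≤ m ∧ p ∼ chainSumPar a n (m - j) := by
  induction j generalizing p m with
  | zero => exact ⟨Nat.zero_le _, (Bisim.par_nil p).symm.trans (by simpa using h)⟩
  | succ j ih =>
    obtain ⟨q', hq', hb⟩ := h.forth (.parR (step_chain a j))
    obtain ⟨-, ⟨j', -, rfl⟩ | ⟨m', rfl, rfl⟩⟩ := step_chainSumPar_inv hq'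
    · -- otherwise `p` would be a chain, and then so would `p ‖ aʲ⁺¹`
      have hp := (hb.trans (.chain_par_chain a j' m)).chains_of_par_chain.1
      exact absurd ((Bisim.par hp (.refl _)).trans (.chain_par_chain a _ _))
        (not_bisim_chain_of_bisim_chainSumPar hn h)
    · obtain ⟨hj, hp⟩ := ih hb
      exact ⟨by omega, by simpa using hp⟩

def ParSplit (a : A) (n l : ℕ) (p q : Tm A) : Prop :=
  ∃ i ≤ l, p ∼ chain a i ∧ q ∼ chainSumPar a n (l - i)

variable {q : Tm A}

lemma parSplit_of_chain (hn : 2 ≤ n) {i : ℕ} (hp : p ∼ chain a i)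
    (h : .par p q ∼ chainSumPar a n l) : ParSplit a n l p q := by
  obtain ⟨hi, hq⟩ := cancel_chain hn i
    (((Bisim.refl q).par hp.symm).trans ((Bisim.par_comm q p).trans h))
  exact ⟨i, hi, hp, hq⟩

lemma ParSplit.chain_of_bisim_right {i : ℕ} (hs : ParSplit a n l p q)
    (hq : q ∼ chainSumPar a n (l - i)) (hi : i ≤ l) : p ∼ chain a i := by
  obtain ⟨i', hi', hp, hq'⟩ := hs
  obtain rfl : i' = i := by have := chainSumPar_inj (hq'.symm.trans hq); omega
  exact hp

lemma parSplit_of_step_left (hn : 2 ≤ n)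
    (ih : ∀ {p q : Tm A}, .par p q ∼ chainSumPar a n l →
      ParSplit a n l p q ∨ ParSplit a n l q p)
    (h : .par p q ∼ chainSumPar a n (l + 1)) {p' : Tm A} (hs : Step p (.name a) p')
    (hb : .par p' q ∼ chainSumPar a n l) :
    ParSplit a n (l + 1) p q ∨ ParSplit a n (l + 1) q p := by
  rcases ih hb with ⟨i, hi, -, hq⟩ | ⟨i, hi, hq, -⟩
  · have hall : ∀ μ p'', Step p μ p'' → μ = .name a ∧ p'' ∼ chain a i := by
      intro μ p'' hs''
      obtain ⟨rfl, ⟨j, -, hc⟩ | ⟨l', hl', hc⟩⟩ :=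
        step_of_matched_chainSumPar h.stepsMatchedBy (.parL hs'')
      · exact absurd hc.chains_of_par_chain.2.1 (not_bisim_chain_of_bisim_chainSumPar hn hq)
      · obtain rfl : l' = l := by omega
        refine ⟨rfl, ?_⟩
        rcases ih hc with hsplit'' | ⟨_, _, hq'', -⟩
        · exact hsplit''.chain_of_bisim_right hq hi
        · exact absurd hq'' (not_bisim_chain_of_bisim_chainSumPar hn hq)
    exact .inl (parSplit_of_chain hn (Bisim.chain_succ ⟨_, _, hs⟩ hall) h)
  · exact .inr (parSplit_of_chain hn hq ((Bisim.par_comm q p).trans h))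

lemma parSplit_of_bisim (hn : 2 ≤ n) (l : ℕ)
    (h : .par p q ∼ chainSumPar a n l) : ParSplit a n l p q ∨ ParSplit a n l q p := by
  induction l generalizing p q with
  | zero =>
    by_cases hq : q ∼ .nil
    · exact .inr (parSplit_of_chain hn (i := 0) hq ((Bisim.par_comm q p).trans h))
    obtain ⟨μ, q', hq'⟩ : ∃ μ q', Step q μ q' := by simpa [Bisim.nil_iff] using hq
    obtain ⟨-, ⟨j, -, hc⟩ | ⟨l', hl', -⟩⟩ :=
      step_of_matched_chainSumPar h.stepsMatchedBy (.parR hq')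
    · exact .inl (parSplit_of_chain hn hc.chains_of_par_chain.1 h)
    · omega
  | succ l ih =>
    obtain ⟨d, hd, hb⟩ := exists_step_of_bisim_chainSumPar_succ h
    rcases Step.par_inv hd with ⟨p', hp', rfl⟩ | ⟨q', hq', rfl⟩ | ⟨-, -, -, -, -, -, htau, -⟩
    · exact parSplit_of_step_left hn ih h hp' hb
    · exact (parSplit_of_step_left hn ih ((Bisim.par_comm q p).trans h) hq'
        ((Bisim.par_comm q' p).trans hb)).symm
    · cases htau

/-! ## The invariant -/

inductive ProperPar (a : A) (n : ℕ) : Tm A → Prop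
  | split {s₁ s₂ : Tm A} : ¬ s₁ ∼ .nil → ¬ s₂ ∼ .nil → ProperPar a n (.par s₁ s₂)
  | padL {s₁ s₂ s : Tm A} : s₂ ∼ .nil → IsSummand s s₁ → s ∼ chainSumPar a n 1 →
      ProperPar a n s → ProperPar a n (.par s₁ s₂)
  | padR {s₁ s₂ s : Tm A} : s₁ ∼ .nil → IsSummand s s₂ → s ∼ chainSumPar a n 1 →
      ProperPar a n s → ProperPar a n (.par s₁ s₂)

def HasProperPar (a : A) (n : ℕ) (p : Tm A) : Prop :=
  ∃ s, IsSummand s p ∧ s ∼ chainSumPar a n 1 ∧ ProperPar a n s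

lemma ProperPar.swap (h : ProperPar a n (.par p q)) : ProperPar a n (.par q p) := by
  cases h with
  | split h₁ h₂ => exact .split h₂ h₁
  | padL h₁ h₂ h₃ h₄ => exact .padR h₁ h₂ h₃ h₄
  | padR h₁ h₂ h₃ h₄ => exact .padL h₁ h₂ h₃ h₄

lemma hasProperPar_chainSumPar (hn : 1 ≤ n) : HasProperPar a n (chainSumPar a n 1) :=
  ⟨_, .refl trivial, .refl _, .split (Bisim.not_nil_of_step (step_chainSum (j := 0) hn))
    (Bisim.not_nil_of_step (step_chain a 0))⟩

lemma not_bisim_pre_chainSumPar (hn : 2 ≤ n) {w : Tm A} :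
    ¬ .pre μ w ∼ chainSumPar a n l :=
  fun h => not_hasInequivDerivs_pre ((hasInequivDerivs_chainSumPar hn l).of_bisim h.symm)

lemma not_bisim_nil_chainSumPar_succ : ¬ .nil ∼ chainSumPar a n (l + 1) :=
  fun h => (Bisim.nil_iff.mp h.symm) _ _ (.parR (step_chain a l))

/-- The expansion of `(a¹ + ⋯ + aⁿ) ‖ a`. -/
def expansion (a : A) (n : ℕ) : Tm A :=
  .plus (sumF (fun i => .pre (.name a) (chain a i)) n) (.pre (.name a) (chainSum a n))

lemma closed_expansion (a : A) (n : ℕ) : Closed (expansion a n) :=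
  ⟨closed_sumF (g := fun i => .pre _ (chain a i)) (fun i => closed_chain a i) n,
    closed_chainSum a n⟩

lemma bisim_expansion (a : A) (n : ℕ) : chainSumPar a n 1 ∼ expansion a n := by
  refine Bisim.of_forth_back (fun x y => x = chainSumPar a n 1 ∧ y = expansion a n) ?_ ?_
    ⟨rfl, rfl⟩
  · rintro x y μ x' ⟨rfl, rfl⟩ hs
    obtain ⟨rfl, ⟨j, hj, rfl⟩ | ⟨l', hl', rfl⟩⟩ := step_chainSumPar_inv hs
    · exact ⟨_, .plusL (step_sumF (i := j + 1) (by omega) (by omega) (.pre _ _)),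
        .inr (Bisim.chain_par_chain a j 1)⟩
    · obtain rfl : l' = 0 := by omega
      exact ⟨_, .plusR (.pre _ _), .inr (Bisim.par_nil _)⟩
  · rintro x y μ y' ⟨rfl, rfl⟩ hs
    rcases Step.plus_inv hs with hs | hs
    · obtain ⟨i, h₁, h₂, hs⟩ := step_sumF_inv hs
      obtain ⟨rfl, rfl⟩ := Step.pre_inv hs
      refine ⟨_, .parL (step_chainSum (j := i - 1) (by omega)), .inr ?_⟩
      simpa [show i - 1 + 1 = i by omega] using Bisim.chain_par_chain a (i - 1) 1
    · obtain ⟨rfl, rfl⟩ := Step.pre_inv hs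
      exact ⟨_, .parR (step_chain a 0), .inr (Bisim.par_nil _)⟩

lemma not_hasProperPar_expansion (hn : 1 ≤ n) : ¬ HasProperPar a n (expansion a n) := by
  rintro ⟨s, hsmd, -, hgood⟩
  cases hsmd with
  | refl h => exact h
  | plusL hsmd =>
    obtain ⟨i, hsmd⟩ := IsSummand.of_sumF hn hsmd
    cases hsmd
    cases hgood
  | plusR hsmd =>
    cases hsmd
    cases hgood

def Witness (a : A) (n : ℕ) (σ : ℕ → Tm A) (v : Tm A) (y : ℕ) (L : List (Tm A)) : Prop :=
  VarPath y v L ∧ ChainSiblings a σ L ∧ HasInequivDerivs (σ y) ∧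
    (siblingsDepth σ L = 0 → HasProperPar a n (σ y))

lemma exists_varPath_of_bisim_chainSumPar_zero {σ : ℕ → Tm A} {t : Tm A} (hsize : t.size < n)
    (h : subst σ t ∼ chainSumPar a n 0) :
    ∃ y L, VarPath y t L ∧ ChainSiblings a σ L ∧ HasInequivDerivs (σ y) :=
  exists_varPath_of_size_lt_card σ t (K := Finset.range n)
    (fun k hk => exists_step_chain_of_bisim_chainSumPar (Finset.mem_range.mp hk) h)
    (by simpa using hsize)

lemma exists_witness (hn : 2 ≤ n) {σ : ℕ → Tm A} {v : Tm A} (hsize : v.size < n)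
    (h : HasProperPar a n (subst σ v)) : ∃ y L, Witness a n σ v y L := by
  induction hv : v.size using Nat.strong_induction_on generalizing v with
  | _ m ih =>
    obtain ⟨s, hs, hsP, hgood⟩ := h
    obtain ⟨v₀, hv₀, ⟨x, rfl, hsx⟩ | ⟨rfl, hnp, hnv⟩⟩ := IsSummand.of_subst hs
    · exact ⟨x, [], .var hv₀, by simp [ChainSiblings],
        ((hasInequivDerivs_chainSumPar hn 1).of_bisim hsP.symm).of_summand hsx,
        fun _ => ⟨s, hsx, hsP, hgood⟩⟩
    have hsize₀ := hv₀.size_le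
    cases v₀ with
    | nil => exact absurd hsP not_bisim_nil_chainSumPar_succ
    | var => exact hnv.elim
    | plus => exact hnp.elim
    | pre => exact absurd hsP (not_bisim_pre_chainSumPar hn)
    | par t₁ t₂ =>
      simp only [size] at hsize₀
      cases hgood with
      | split h₁ h₂ =>
        rcases parSplit_of_bisim hn 1 hsP with ⟨i, hi, hc, hP⟩ | ⟨i, hi, hc, hP⟩
        · obtain rfl : i = 1 := by by_contra; exact h₁ (by simpa [show i = 0 by omega] using hc)
          obtain ⟨y, L, hp, hL, hy⟩ := exists_varPath_of_bisim_chainSumPar_zero (by omega) hP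
          exact ⟨y, t₁ :: L, .parR hv₀ hp, hL.cons hc, hy, by simp [hc.depth_of_chain]⟩
        · obtain rfl : i = 1 := by by_contra; exact h₂ (by simpa [show i = 0 by omega] using hc)
          obtain ⟨y, L, hp, hL, hy⟩ := exists_varPath_of_bisim_chainSumPar_zero (by omega) hP
          exact ⟨y, t₂ :: L, .parL hv₀ hp, hL.cons hc, hy, by simp [hc.depth_of_chain]⟩
      | padL hnil hs' hsP' hgood' =>
        obtain ⟨y, L, hp, hL, hy, hyP⟩ := ih _ (by omega) (by omega) ⟨_, hs', hsP', hgood'⟩ rfl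
        refine ⟨y, t₂ :: L, .parL hv₀ hp, hL.cons (j := 0) hnil, hy, fun h0 => hyP ?_⟩
        rw [siblingsDepth_cons] at h0
        omega
      | padR hnil hs' hsP' hgood' =>
        obtain ⟨y, L, hp, hL, hy, hyP⟩ := ih _ (by omega) (by omega) ⟨_, hs', hsP', hgood'⟩ rfl
        refine ⟨y, t₁ :: L, .parR hv₀ hp, hL.cons (j := 0) hnil, hy, fun h0 => hyP ?_⟩
        rw [siblingsDepth_cons] at h0
        omega

lemma properPar_of_par_nil {X Y : Tm A} (hY : Y ∼ .nil) (hX : HasProperPar a n X)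
    (hw : StepsMatchedBy (.par X Y) (chainSumPar a n 1)) :
    .par X Y ∼ chainSumPar a n 1 ∧ ProperPar a n (.par X Y) := by
  obtain ⟨s, hs, hsP, hgood⟩ := hX
  have hXY := Bisim.par_of_nil_right (p := X) hY
  exact ⟨hXY.trans (.of_summand (hw.of_bisim hXY.symm) hs hsP), .padL hY hs hsP hgood⟩

lemma properPar_of_par_chain_succ (hn : 2 ≤ n) {X Y : Tm A} {j : ℕ}
    (hY : Y ∼ chain a (j + 1)) (hw : StepsMatchedBy (.par X Y) (chainSumPar a n 1))
    (hX : (∀ μ z, Step X μ z → z ∼ chain a z.depth) → HasInequivDerivs X) :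
    .par X Y ∼ chainSumPar a n 1 ∧ ProperPar a n (.par X Y) := by
  have hXineq : HasInequivDerivs X := hX fun μ z hz => by
    obtain ⟨-, ⟨i, -, hc⟩ | ⟨l', hl', hc⟩⟩ := step_of_matched_chainSumPar hw (.parL hz)
    · exact hc.chains_of_par_chain.1
    · obtain ⟨hle, -⟩ := cancel_chain hn (j + 1) (((Bisim.refl z).par hY.symm).trans hc)
      omega
  obtain ⟨d', hd', hb'⟩ := hY.back (step_chain a j)
  obtain ⟨-, ⟨i, -, hc⟩ | ⟨l', hl', hc⟩⟩ := step_of_matched_chainSumPar hw (.parR hd')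
  · exact absurd hXineq hc.chains_of_par_chain.1.not_hasInequivDerivs_of_chain
  obtain rfl : l' = 0 := by omega
  obtain ⟨hj, hXP⟩ := cancel_chain hn j (((Bisim.refl X).par hb'.symm).trans hc)
  obtain rfl : j = 0 := by omega
  obtain ⟨_, _, _, _, hXstep, -⟩ := hXineq
  exact ⟨(hXP.par hY).trans ((Bisim.par_nil _).par (.refl _)),
    .split (Bisim.not_nil_of_step hXstep) (Bisim.not_nil_of_step hd')⟩

lemma properPar_of_par_chain (hn : 2 ≤ n) {X Y : Tm A} {j : ℕ} (hY : Y ∼ chain a j)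
    (hw : StepsMatchedBy (.par X Y) (chainSumPar a n 1))
    (hpad : j = 0 → StepsMatchedBy X (chainSumPar a n 1) → HasProperPar a n X)
    (hX : (∀ μ z, Step X μ z → z ∼ chain a z.depth) → HasInequivDerivs X) :
    .par X Y ∼ chainSumPar a n 1 ∧ ProperPar a n (.par X Y) := by
  cases j with
  | zero =>
    exact properPar_of_par_nil hY (hpad rfl (hw.of_bisim (Bisim.par_of_nil_right hY).symm)) hw
  | succ j => exact properPar_of_par_chain_succ hn hY hw hX

lemma hasProperPar_of_varPath (hn : 2 ≤ n) {σ : ℕ → Tm A} {y : ℕ}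
    (hy : HasInequivDerivs (σ y)) {w : Tm A} {L : List (Tm A)} (h : VarPath y w L)
    (hL : ChainSiblings a σ L) (hw : StepsMatchedBy (subst σ w) (chainSumPar a n 1))
    (hP : siblingsDepth σ L = 0 → HasProperPar a n (σ y)) : HasProperPar a n (subst σ w) := by
  induction h with
  | var h =>
    obtain ⟨s, hs, hsP, hgood⟩ := hP rfl
    exact ⟨s, h.subst_var hs, hsP, hgood⟩
  | @parL v v₁ v₂ L hnode hp ih =>
    have hnode := hnode.subst σ trivial
    have hL' : ChainSiblings a σ L := fun c hc => hL c (List.mem_cons_of_mem _ hc)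
    obtain ⟨hB, hgood⟩ := properPar_of_par_chain hn (hL v₂ List.mem_cons_self)
      (hw.mono fun _ _ => hnode.step)
      (fun hj hX => ih hL' hX fun h0 => hP (by simp [hj, h0]))
      (hp.hasInequivDerivs hL' hy)
    exact ⟨_, hnode, hB, hgood⟩
  | @parR v v₁ v₂ L hnode hp ih =>
    have hnode := hnode.subst σ trivial
    have hL' : ChainSiblings a σ L := fun c hc => hL c (List.mem_cons_of_mem _ hc)
    obtain ⟨hB, hgood⟩ := properPar_of_par_chain hn (hL v₁ List.mem_cons_self)
      ((hw.mono fun _ _ => hnode.step).of_bisim (Bisim.par_comm _ _))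
      (fun hj hX => ih hL' hX fun h0 => hP (by simp [hj, h0]))
      (hp.hasInequivDerivs hL' hy)
    exact ⟨_, hnode, (Bisim.par_comm _ _).trans hB, hgood.swap⟩

lemma HasProperPar.of_eqnSound (hn : 2 ≤ n) {t u : Tm A} (htu : EqnSound Bisim t u)
    (hsize : t.size < n) {σ : ℕ → Tm A} (hσ : ClosedSubst σ)
    (ht : subst σ t ∼ chainSumPar a n 1) (h : HasProperPar a n (subst σ t)) :
    HasProperPar a n (subst σ u) := by
  obtain ⟨y, L, hp, hL, hy, hyP⟩ := exists_witness hn hsize h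
  have hu : subst σ u ∼ chainSumPar a n 1 := (htu σ hσ).symm.trans ht
  -- Probe `y` with a chain longer than any chain derivative of `σ u`, whose depth is `n + 1`.
  let N := (n + 2) * u.size
  let ρ x := if x = y then .plus (σ y) (chain a (N + 1)) else σ x
  have hρ : ClosedSubst ρ := fun x => by
    by_cases hx : x = y
    · simpa [ρ, hx] using ⟨hσ y, closed_chain a (N + 1)⟩
    · simpa [ρ, hx] using hσ x
  have hρx : ∀ x, x ≠ y → ρ x = σ x := fun x hx => if_neg hx
  obtain ⟨z, hz, hzb⟩ := hp.lift_step ρ (μ := .name a) (d := chain a N)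
    (by simpa [ρ] using Step.plusR (t := σ y) (step_chain a N))
  have hsib : L.map (subst ρ) = L.map (subst σ) := List.map_congr_left fun c hc =>
    subst_congr fun x hx => hρx x (by rintro rfl; exact not_bisim_chain_of_occurs hy hx (hL c hc))
  rw [hsib] at hzb
  obtain ⟨r, hr, hrz⟩ := (htu ρ hρ).forth hz
  obtain ⟨L', hp', hL', hm⟩ := exists_varPath_of_deep_step (D := n + 2) (if_pos rfl) hρx hy
    (by rw [hu.depth_eq, depth_chainSumPar]; omega) hr
    (hrz.symm.trans (hzb.trans ((hL.bisim_parFold (.refl _)).trans (.chain_par_chain a _ _))))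
    (Nat.le_add_right _ _)
  exact hasProperPar_of_varPath hn hy hp' hL' hu.stepsMatchedBy fun h0 => hyP (by omega)

lemma HasProperPar.plus_of_imp {t₁ t₂ u₁ u₂ : Tm A}
    (ht : .plus t₁ t₂ ∼ chainSumPar a n 1)
    (h₁ : t₁ ∼ chainSumPar a n 1 → HasProperPar a n t₁ → HasProperPar a n u₁)
    (h₂ : t₂ ∼ chainSumPar a n 1 → HasProperPar a n t₂ → HasProperPar a n u₂)
    (h : HasProperPar a n (.plus t₁ t₂)) : HasProperPar a n (.plus u₁ u₂) := by
  obtain ⟨s, hs, hsP, hgood⟩ := h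
  cases hs with
  | refl h => exact h.elim
  | plusL hs =>
    obtain ⟨s', hs', hP⟩ :=
      h₁ (.of_summand (ht.stepsMatchedBy.mono fun _ _ => .plusL) hs hsP) ⟨s, hs, hsP, hgood⟩
    exact ⟨s', .plusL hs', hP⟩
  | plusR hs =>
    obtain ⟨s', hs', hP⟩ :=
      h₂ (.of_summand (ht.stepsMatchedBy.mono fun _ _ => .plusR) hs hsP) ⟨s, hs, hsP, hgood⟩
    exact ⟨s', .plusR hs', hP⟩

lemma HasProperPar.par_of_imp {t₁ t₂ u₁ u₂ : Tm A}
    (hu : .par u₁ u₂ ∼ chainSumPar a n 1) (htu₁ : t₁ ∼ u₁) (htu₂ : t₂ ∼ u₂)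
    (h₁ : t₁ ∼ chainSumPar a n 1 → HasProperPar a n t₁ → HasProperPar a n u₁)
    (h₂ : t₂ ∼ chainSumPar a n 1 → HasProperPar a n t₂ → HasProperPar a n u₂)
    (h : HasProperPar a n (.par t₁ t₂)) : HasProperPar a n (.par u₁ u₂) := by
  obtain ⟨s, hs, hsP, hgood⟩ := h
  cases hs
  refine ⟨_, .refl trivial, hu, ?_⟩
  cases hgood with
  | split hn₁ hn₂ =>
    exact .split (fun h => hn₁ (htu₁.trans h)) (fun h => hn₂ (htu₂.trans h))
  | padL hnil hs' hsP' hgood' =>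
    obtain ⟨s'', hs'', hsP'', hgood''⟩ :=
      h₁ ((Bisim.par_of_nil_right hnil).symm.trans hsP) ⟨_, hs', hsP', hgood'⟩
    exact .padL (htu₂.symm.trans hnil) hs'' hsP'' hgood''
  | padR hnil hs' hsP' hgood' =>
    obtain ⟨s'', hs'', hsP'', hgood''⟩ :=
      h₂ ((Bisim.par_of_nil_left hnil).symm.trans hsP) ⟨_, hs', hsP', hgood'⟩
    exact .padR (htu₁.symm.trans hnil) hs'' hsP'' hgood''

lemma hasProperPar_iff_of_deriv (hn : 2 ≤ n) {E : Set (Eqn A)} (hE : SystemSound Bisim E)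
    (hsize : ∀ e ∈ E, e.1.size < n ∧ e.2.size < n) {t u : Tm A} (h : Deriv E t u)
    (σ : ℕ → Tm A) (hσ : ClosedSubst σ) (ht : subst σ t ∼ chainSumPar a n 1) :
    HasProperPar a n (subst σ t) ↔ HasProperPar a n (subst σ u) := by
  induction h generalizing σ with
  | @ax t u σ' he =>
    have hτ : ClosedSubst fun x => subst σ (σ' x) := fun x => closed_subst hσ (σ' x)
    have htu := hE _ he
    rw [subst_subst] at ht
    rw [subst_subst, subst_subst]
    exact ⟨.of_eqnSound hn htu (hsize _ he).1 hτ ht,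
      .of_eqnSound hn (fun σ hσ => (htu σ hσ).symm) (hsize _ he).2 hτ ((htu _ hτ).symm.trans ht)⟩
  | refl => rfl
  | symm h ih => exact (ih σ hσ ((h.sound hE σ hσ).trans ht)).symm
  | trans h₁ _ ih₁ ih₂ =>
    exact (ih₁ σ hσ ht).trans (ih₂ σ hσ ((h₁.sound hE σ hσ).symm.trans ht))
  | pre => exact absurd ht (not_bisim_pre_chainSumPar hn)
  | plus h₁ h₂ ih₁ ih₂ =>
    have hu := ((h₁.plus h₂).sound hE σ hσ).symm.trans ht
    exact ⟨.plus_of_imp ht (fun h => (ih₁ σ hσ h).mp) (fun h => (ih₂ σ hσ h).mp),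
      .plus_of_imp hu (fun h => (ih₁ σ hσ ((h₁.sound hE σ hσ).trans h)).mpr)
        (fun h => (ih₂ σ hσ ((h₂.sound hE σ hσ).trans h)).mpr)⟩
  | par h₁ h₂ ih₁ ih₂ =>
    have e₁ := h₁.sound hE σ hσ
    have e₂ := h₂.sound hE σ hσ
    have hu := (e₁.par e₂).symm.trans ht
    exact ⟨.par_of_imp hu e₁ e₂ (fun h => (ih₁ σ hσ h).mp) (fun h => (ih₂ σ hσ h).mp),
      .par_of_imp ht e₁.symm e₂.symm (fun h => (ih₁ σ hσ (e₁.trans h)).mpr)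
        (fun h => (ih₂ σ hσ (e₂.trans h)).mpr)⟩

lemma not_deriv_expansion (hn : 2 ≤ n) {E : Set (Eqn A)} (hE : SystemSound Bisim E)
    (hsize : ∀ e ∈ E, e.1.size < n ∧ e.2.size < n) :
    ¬ Deriv E (chainSumPar a n 1) (expansion a n) := fun h => by
  have hiff := hasProperPar_iff_of_deriv hn hE hsize h (fun _ => .nil) (fun _ => trivial)
    (by rw [subst_of_closed _ (closed_chainSumPar a n 1)])
  rw [subst_of_closed _ (closed_chainSumPar a n 1), subst_of_closed _ (closed_expansion a n)]
    at hiff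
  exact not_hasProperPar_expansion (by omega) (hiff.mp (hasProperPar_chainSumPar (by omega)))

end Moller

/-- **Moller's theorem**: if the set `A` of action names is nonempty, then there is no
finite axiom system over CCS that is sound and ground-complete modulo bisimilarity. -/
theorem stmt_0 (A : Type) [Nonempty A] :
    ¬ ∃ E : Set (Eqn A), E.Finite ∧ SystemSound Bisim E ∧ GroundComplete Bisim E := by
  rintro ⟨E, hfin, hsound, hcomplete⟩
  obtain ⟨a⟩ := ‹Nonempty A›
  obtain ⟨m, hm⟩ := (hfin.image fun e => max e.1.size e.2.size).bddAbove
  refine Moller.not_deriv_expansion (a := a) (n := m + 2) (by omega) hsound (fun e he => ?_)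
    (hcomplete _ _ (Moller.closed_chainSumPar a _ 1) (Moller.closed_expansion a _)
      (Moller.bisim_expansion a _))
  have := hm (Set.mem_image_of_mem _ he)
  simp only [max_le_iff] at this
  omega
end

section
/- For every n ≥ 1, Moller's equation M_n is sound modulo bisimilarity over CCS; that is, for all processes p, q, r_1, …, r_n: (p + q) ‖ (r_1 + ⋯ + r_n) + Σ_{i=1}^n (p ‖ r_i + q ‖ r_i) ∼_B p ‖ (r_1 + ⋯ + r_n) + q ‖ (r_1 + ⋯ + r_n) + Σ_{i=1}^n ((p + q) ‖ r_i). -/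
lemma sumF_step {A : Type} (g : ℕ → Tm A) :
    ∀ n μ (s : Tm A), Step (sumF g n) μ s → ∃ i, 1 ≤ i ∧ i ≤ n ∧ Step (g i) μ s := by
  intro n
  induction n with
  | zero => intro μ s h; cases h
  | succ m ih =>
    intro μ s h
    match m, h with
    | 0, h => exact ⟨1, le_refl 1, le_refl 1, h⟩
    | (k+1), h =>
      cases h with
      | plusL h' =>
        obtain ⟨i, h1, h2, h3⟩ := ih μ s h'
        exact ⟨i, h1, Nat.le_succ_of_le h2, h3⟩
      | plusR h' => exact ⟨k+2, by omega, le_refl _, h'⟩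

lemma step_sumF_s1 {A : Type} (g : ℕ → Tm A) :
    ∀ n i μ (s : Tm A), 1 ≤ i → i ≤ n → Step (g i) μ s → Step (sumF g n) μ s := by
  intro n
  induction n with
  | zero => intro i μ s h1 h2 _; omega
  | succ m ih =>
    intro i μ s h1 h2 h
    match m with
    | 0 =>
      have : i = 1 := by omega
      subst this; exact h
    | (k+1) =>
      by_cases hik : i = k + 2
      · subst hik; exact Step.plusR h
      · exact Step.plusL (ih i μ s h1 (by omega) h)

section Transfer

variable {A : Type} (n : ℕ) (p q : Tm A) (r : ℕ → Tm A)

lemma moller_fwd (μ : Act A) (t : Tm A)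
    (h : Step (.plus (.par (.plus p q) (sumF r n))
             (sumF (fun i => .plus (.par p (r i)) (.par q (r i))) n)) μ t) :
    Step (.plus (.par p (sumF r n))
        (.plus (.par q (sumF r n))
               (sumF (fun i => .par (.plus p q) (r i)) n))) μ t := by
  cases h with
  | plusL h =>
    cases h with
    | parL h =>
      cases h with
      | plusL h => exact .plusL (.parL h)
      | plusR h => exact .plusR (.plusL (.parL h))
    | parR h =>
      obtain ⟨i, h1, h2, h3⟩ := sumF_step r n _ _ h
      exact .plusR (.plusR (step_sumF_s1 _ n i _ _ h1 h2 (.parR h3)))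
    | comm hne hl hr =>
      cases hl with
      | plusL h => exact .plusL (.comm hne h hr)
      | plusR h => exact .plusR (.plusL (.comm hne h hr))
  | plusR h =>
    obtain ⟨i, h1, h2, h3⟩ := sumF_step _ n _ _ h
    cases h3 with
    | plusL h4 =>
      cases h4 with
      | parL h5 => exact .plusR (.plusR (step_sumF_s1 _ n i _ _ h1 h2 (.parL (.plusL h5))))
      | parR h5 => exact .plusL (.parR (step_sumF_s1 r n i _ _ h1 h2 h5))
      | comm hne hl hr => exact .plusL (.comm hne hl (step_sumF_s1 r n i _ _ h1 h2 hr))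
    | plusR h4 =>
      cases h4 with
      | parL h5 => exact .plusR (.plusR (step_sumF_s1 _ n i _ _ h1 h2 (.parL (.plusR h5))))
      | parR h5 => exact .plusR (.plusL (.parR (step_sumF_s1 r n i _ _ h1 h2 h5)))
      | comm hne hl hr => exact .plusR (.plusL (.comm hne hl (step_sumF_s1 r n i _ _ h1 h2 hr)))

lemma moller_bwd (μ : Act A) (t : Tm A)
    (h : Step (.plus (.par p (sumF r n))
        (.plus (.par q (sumF r n))
               (sumF (fun i => .par (.plus p q) (r i)) n))) μ t) :
    Step (.plus (.par (.plus p q) (sumF r n))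
             (sumF (fun i => .plus (.par p (r i)) (.par q (r i))) n)) μ t := by
  cases h with
  | plusL h =>
    cases h with
    | parL h => exact .plusL (.parL (.plusL h))
    | parR h =>
      obtain ⟨i, h1, h2, h3⟩ := sumF_step r n _ _ h
      exact .plusR (step_sumF_s1 _ n i _ _ h1 h2 (.plusL (.parR h3)))
    | comm hne hl hr =>
      obtain ⟨i, h1, h2, h3⟩ := sumF_step r n _ _ hr
      exact .plusR (step_sumF_s1 _ n i _ _ h1 h2 (.plusL (.comm hne hl h3)))
  | plusR h =>
    cases h with
    | plusL h =>
      cases h with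
      | parL h => exact .plusL (.parL (.plusR h))
      | parR h =>
        obtain ⟨i, h1, h2, h3⟩ := sumF_step r n _ _ h
        exact .plusR (step_sumF_s1 _ n i _ _ h1 h2 (.plusR (.parR h3)))
      | comm hne hl hr =>
        obtain ⟨i, h1, h2, h3⟩ := sumF_step r n _ _ hr
        exact .plusR (step_sumF_s1 _ n i _ _ h1 h2 (.plusR (.comm hne hl h3)))
    | plusR h =>
      obtain ⟨i, h1, h2, h3⟩ := sumF_step _ n _ _ h
      cases h3 with
      | parL h4 =>
        cases h4 with
        | plusL h5 => exact .plusR (step_sumF_s1 _ n i _ _ h1 h2 (.plusL (.parL h5)))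
        | plusR h5 => exact .plusR (step_sumF_s1 _ n i _ _ h1 h2 (.plusR (.parL h5)))
      | parR h4 => exact .plusL (.parR (step_sumF_s1 r n i _ _ h1 h2 h4))
      | comm hne hl hr =>
        cases hl with
        | plusL h5 => exact .plusR (step_sumF_s1 _ n i _ _ h1 h2 (.plusL (.comm hne h5 hr)))
        | plusR h5 => exact .plusR (step_sumF_s1 _ n i _ _ h1 h2 (.plusR (.comm hne h5 hr)))

end Transfer

/-- **Soundness of Moller's equations `M_n` modulo bisimilarity**: for every `n ≥ 1` and
all processes `p`, `q`, `r 1`, …, `r n`,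
`(p + q) ‖ (r 1 + ⋯ + r n) + Σ_{i=1}^n (p ‖ r i + q ‖ r i) ∼_B
 p ‖ (r 1 + ⋯ + r n) + q ‖ (r 1 + ⋯ + r n) + Σ_{i=1}^n ((p + q) ‖ r i)`. -/
theorem stmt_1 (A : Type) (n : ℕ) (hn : 1 ≤ n) (p q : Tm A) (r : ℕ → Tm A)
    (hp : Closed p) (hq : Closed q) (hr : ∀ i, 1 ≤ i → i ≤ n → Closed (r i)) :
    Bisim
      (.plus (.par (.plus p q) (sumF r n))
             (sumF (fun i => .plus (.par p (r i)) (.par q (r i))) n))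
      (.plus (.par p (sumF r n))
        (.plus (.par q (sumF r n))
               (sumF (fun i => .par (.plus p q) (r i)) n))) := by
  set L : Tm A := .plus (.par (.plus p q) (sumF r n))
             (sumF (fun i => .plus (.par p (r i)) (.par q (r i))) n) with hL
  set R : Tm A := .plus (.par p (sumF r n))
        (.plus (.par q (sumF r n))
               (sumF (fun i => .par (.plus p q) (r i)) n)) with hR
  refine ⟨fun a b => a = b ∨ (a = L ∧ b = R) ∨ (a = R ∧ b = L), ⟨?_, ?_⟩, Or.inr (Or.inl ⟨rfl, rfl⟩)⟩
  · rintro a b (rfl | ⟨rfl, rfl⟩ | ⟨rfl, rfl⟩)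
    · exact Or.inl rfl
    · exact Or.inr (Or.inr ⟨rfl, rfl⟩)
    · exact Or.inr (Or.inl ⟨rfl, rfl⟩)
  · rintro a b μ a' (rfl | ⟨rfl, rfl⟩ | ⟨rfl, rfl⟩) hstep
    · exact ⟨a', hstep, Or.inl rfl⟩
    · exact ⟨a', moller_fwd n p q r μ a' hstep, Or.inl rfl⟩
    · exact ⟨a', moller_bwd n p q r μ a' hstep, Or.inl rfl⟩
end
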